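/- arXiv:math/9808005 — 6 statements merged into one kernel-verified Lean document; each statement's English description precedes it below -/
import Mathlib

section
/- Let (S;H,V;M) be a set-theoretic double groupoid with core C. Let c, c' ∈ C with α_C(c') = β_C(c), and set v₂ = β̃_H(c) ∈ V and h₂ = β̃_V(c) ∈ H. Then both composites (c' ∘_H 1̃^V_{h₂}) ∘_V c and (c' ∘_V 1̃^H_{v₂}) ∘_H c are defined and they are equal. -/
/-- A set-theoretic groupoid structure on a set `S` with object set `B`.
The composition `comp s' s` is the composite "`s'` after `s`", subject to the
composability condition `src s' = tgt s`; all structure maps are total functions,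
and the groupoid axioms are required only on composable elements. -/
structure GpdOn (S : Type*) (B : Type*) where
  src : S → B
  tgt : S → B
  comp : S → S → S
  one : B → S
  inv : S → S
  src_comp : ∀ {s' s : S}, src s' = tgt s → src (comp s' s) = src s
  tgt_comp : ∀ {s' s : S}, src s' = tgt s → tgt (comp s' s) = tgt s'
  src_one : ∀ b, src (one b) = b
  tgt_one : ∀ b, tgt (one b) = b
  comp_one : ∀ s, comp s (one (src s)) = s
  one_comp : ∀ s, comp (one (tgt s)) s = s
  src_inv : ∀ s, src (inv s) = tgt s
  tgt_inv : ∀ s, tgt (inv s) = src s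
  comp_inv : ∀ s, comp s (inv s) = one (tgt s)
  inv_comp : ∀ s, comp (inv s) s = one (src s)
  comp_assoc : ∀ {s₃ s₂ s₁ : S}, src s₃ = tgt s₂ → src s₂ = tgt s₁ →
    comp (comp s₃ s₂) s₁ = comp s₃ (comp s₂ s₁)

/-- A morphism of set-theoretic groupoids over a map of object sets. -/
structure IsGpdHom {S B S' B' : Type*} (G : GpdOn S B) (G' : GpdOn S' B')
    (φ : S → S') (φ₀ : B → B') : Prop where
  map_src : ∀ s, G'.src (φ s) = φ₀ (G.src s)
  map_tgt : ∀ s, G'.tgt (φ s) = φ₀ (G.tgt s)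
  map_one : ∀ b, φ (G.one b) = G'.one (φ₀ b)
  map_comp : ∀ {s' s : S}, G.src s' = G.tgt s → φ (G.comp s' s) = G'.comp (φ s') (φ s)

/-- A set-theoretic double groupoid `(S; H, V; M)`: side groupoids `H ⇉ M` and
`V ⇉ M`, a horizontal groupoid structure `S ⇉ V` (with maps `α̃_H, β̃_H, ∘_H, 1̃^H`)
and a vertical groupoid structure `S ⇉ H` (with maps `α̃_V, β̃_V, ∘_V, 1̃^V`), such
that each structure map of either groupoid structure on `S` is a morphism of
groupoids with respect to the other structure, over the corresponding structure
map of `H` resp. `V`; in particular the interchange law holds. -/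
structure DoubleGpd (S H V M : Type*) where
  /-- the side groupoid `H ⇉ M` -/
  hGpd : GpdOn H M
  /-- the side groupoid `V ⇉ M` -/
  vGpd : GpdOn V M
  /-- the horizontal groupoid structure `S ⇉ V`, with source `α̃_H`, target `β̃_H`,
  composition `∘_H` and identities `1̃^H`. -/
  horiz : GpdOn S V
  /-- the vertical groupoid structure `S ⇉ H`, with source `α̃_V`, target `β̃_V`,
  composition `∘_V` and identities `1̃^V`. -/
  vert : GpdOn S H
  /-- `α̃_V` is a morphism from the horizontal structure to `H ⇉ M` over `α_V`. -/
  vertSrc_hom : IsGpdHom horiz hGpd vert.src vGpd.src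
  /-- `β̃_V` is a morphism from the horizontal structure to `H ⇉ M` over `β_V`. -/
  vertTgt_hom : IsGpdHom horiz hGpd vert.tgt vGpd.tgt
  /-- `1̃^V` is a morphism from `H ⇉ M` to the horizontal structure over `1^V`. -/
  vertOne_hom : IsGpdHom hGpd horiz vert.one vGpd.one
  /-- vertical inversion is a morphism of the horizontal structure over inversion in `V`. -/
  vertInv_hom : IsGpdHom horiz horiz vert.inv vGpd.inv
  /-- `α̃_H` is a morphism from the vertical structure to `V ⇉ M` over `α_H`. -/
  horizSrc_hom : IsGpdHom vert vGpd horiz.src hGpd.src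
  /-- `β̃_H` is a morphism from the vertical structure to `V ⇉ M` over `β_H`. -/
  horizTgt_hom : IsGpdHom vert vGpd horiz.tgt hGpd.tgt
  /-- `1̃^H` is a morphism from `V ⇉ M` to the vertical structure over `1^H`. -/
  horizOne_hom : IsGpdHom vGpd vert horiz.one hGpd.one
  /-- horizontal inversion is a morphism of the vertical structure over inversion in `H`. -/
  horizInv_hom : IsGpdHom vert vert horiz.inv hGpd.inv
  /-- the interchange law. -/
  interchange : ∀ {s₁ s₂ s₃ s₄ : S},
    horiz.src s₁ = horiz.tgt s₂ → horiz.src s₃ = horiz.tgt s₄ →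
    vert.src s₁ = vert.tgt s₃ → vert.src s₂ = vert.tgt s₄ →
    vert.comp (horiz.comp s₁ s₂) (horiz.comp s₃ s₄) =
      horiz.comp (vert.comp s₁ s₃) (vert.comp s₂ s₄)

namespace DoubleGpd

variable {S H V M : Type*}

/-- The double identity `1²_m = 1̃^V_{1^H_m}` of a double groupoid. -/
def doubleOne (D : DoubleGpd S H V M) (m : M) : S := D.vert.one (D.hGpd.one m)

/-- Membership in the core: `c` is a core element if both its sources are identities
over a common point `m ∈ M`. -/
def InCore (D : DoubleGpd S H V M) (c : S) : Prop :=
  ∃ m : M, D.horiz.src c = D.vGpd.one m ∧ D.vert.src c = D.hGpd.one m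

/-- The core of a double groupoid, as a set. -/
abbrev Core (D : DoubleGpd S H V M) : Type _ := {c : S // D.InCore c}

/-- The source `α_C(c) = α_V(α̃_H(c))` of a core element. -/
def coreSrc (D : DoubleGpd S H V M) (c : S) : M := D.vGpd.src (D.horiz.src c)

/-- The target `β_C(c) = β_V(β̃_H(c))` of a core element. -/
def coreTgt (D : DoubleGpd S H V M) (c : S) : M := D.vGpd.tgt (D.horiz.tgt c)

/-- The core composition `c' ⊡ c = (c' ∘_H 1̃^V_{β̃_V c}) ∘_V c`. -/
def coreComp (D : DoubleGpd S H V M) (c' c : S) : S :=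
  D.vert.comp (D.horiz.comp c' (D.vert.one (D.vert.tgt c))) c

/-- The core inversion `c ↦ c^{-1(H)} ∘_V 1̃^H_{(β̃_H c)⁻¹}`. -/
def coreInv (D : DoubleGpd S H V M) (c : S) : S :=
  D.vert.comp (D.horiz.inv c) (D.horiz.one (D.vGpd.inv (D.horiz.tgt c)))

end DoubleGpd

/-- A morphism of set-theoretic double groupoids. -/
structure IsDoubleGpdHom {S H V M S' H' V' M' : Type*}
    (D : DoubleGpd S H V M) (D' : DoubleGpd S' H' V' M')
    (φ : S → S') (φH : H → H') (φV : V → V') (φM : M → M') : Prop where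
  horiz_hom : IsGpdHom D.horiz D'.horiz φ φV
  vert_hom : IsGpdHom D.vert D'.vert φ φH
  h_hom : IsGpdHom D.hGpd D'.hGpd φH φM
  v_hom : IsGpdHom D.vGpd D'.vGpd φV φM

/-- `C` is *the* core groupoid structure of the double groupoid `D`: its source, target,
identities are the core source/target/double identities, composition is
`c' ⊡ c = (c' ∘_H 1̃^V_{β̃_V c}) ∘_V c` on composable pairs, and inversion is
`c ↦ c^{-1(H)} ∘_V 1̃^H_{(β̃_H c)⁻¹}`. -/
structure IsCoreGpd {S H V M : Type*} (D : DoubleGpd S H V M)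
    (C : GpdOn D.Core M) : Prop where
  src_eq : ∀ c, C.src c = D.coreSrc c.val
  tgt_eq : ∀ c, C.tgt c = D.coreTgt c.val
  one_eq : ∀ m, (C.one m).val = D.doubleOne m
  comp_eq : ∀ c' c, D.coreSrc c'.val = D.coreTgt c.val →
    (C.comp c' c).val = D.coreComp c'.val c.val
  inv_eq : ∀ c, (C.inv c).val = D.coreInv c.val

/-- For core elements `c, c'` with `α_C(c') = β_C(c)`, setting
`v₂ = β̃_H(c)` and `h₂ = β̃_V(c)`, both composites `(c' ∘_H 1̃^V_{h₂}) ∘_V c` and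
`(c' ∘_V 1̃^H_{v₂}) ∘_H c` are defined, and they are equal. -/
theorem doubleGpd_core_comp_two_ways {S H V M : Type*} (D : DoubleGpd S H V M)
    {c c' : S} (hc : D.InCore c) (hc' : D.InCore c')
    (hcomp : D.coreSrc c' = D.coreTgt c) :
    -- `c' ∘_H 1̃^V_{h₂}` is defined:
    (D.horiz.src c' = D.horiz.tgt (D.vert.one (D.vert.tgt c)) ∧
    -- `(c' ∘_H 1̃^V_{h₂}) ∘_V c` is defined:
     D.vert.src (D.horiz.comp c' (D.vert.one (D.vert.tgt c))) = D.vert.tgt c ∧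
    -- `c' ∘_V 1̃^H_{v₂}` is defined:
     D.vert.src c' = D.vert.tgt (D.horiz.one (D.horiz.tgt c)) ∧
    -- `(c' ∘_V 1̃^H_{v₂}) ∘_H c` is defined:
     D.horiz.src (D.vert.comp c' (D.horiz.one (D.horiz.tgt c))) = D.horiz.tgt c) ∧
    -- and the two composites are equal:
    D.vert.comp (D.horiz.comp c' (D.vert.one (D.vert.tgt c))) c =
      D.horiz.comp (D.vert.comp c' (D.horiz.one (D.horiz.tgt c))) c := by
  obtain ⟨m, hH, hV⟩ := hc
  obtain ⟨m', hH', hV'⟩ := hc'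
  -- m' = coreTgt c
  have hm' : m' = D.vGpd.tgt (D.horiz.tgt c) := by
    have : D.coreSrc c' = m' := by
      simp [DoubleGpd.coreSrc, hH', D.vGpd.src_one]
    rw [this] at hcomp
    exact hcomp
  have htgt_h2 : D.hGpd.tgt (D.vert.tgt c) = m' := by
    rw [D.vertTgt_hom.map_tgt, hm']
  have htgt_v2 : D.vGpd.tgt (D.horiz.tgt c) = m' := hm'.symm
  -- condition 1
  have h1 : D.horiz.src c' = D.horiz.tgt (D.vert.one (D.vert.tgt c)) := by
    rw [hH', D.horizTgt_hom.map_one, htgt_h2]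
  -- condition 3
  have h3 : D.vert.src c' = D.vert.tgt (D.horiz.one (D.horiz.tgt c)) := by
    rw [hV', D.vertTgt_hom.map_one, htgt_v2]
  -- condition 2
  have h2 : D.vert.src (D.horiz.comp c' (D.vert.one (D.vert.tgt c))) = D.vert.tgt c := by
    rw [D.vertSrc_hom.map_comp h1, hV', D.vert.src_one]
    have : D.hGpd.one m' = D.hGpd.one (D.hGpd.tgt (D.vert.tgt c)) := by rw [htgt_h2]
    rw [this, D.hGpd.one_comp]
  -- condition 4
  have h4 : D.horiz.src (D.vert.comp c' (D.horiz.one (D.horiz.tgt c))) = D.horiz.tgt c := by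
    rw [D.horizSrc_hom.map_comp h3, hH', D.horiz.src_one]
    have : D.vGpd.one m' = D.vGpd.one (D.vGpd.tgt (D.horiz.tgt c)) := by rw [htgt_v2]
    rw [this, D.vGpd.one_comp]
  refine ⟨⟨h1, h2, h3, h4⟩, ?_⟩
  have key := D.interchange (s₁ := c') (s₂ := D.vert.one (D.vert.tgt c))
    (s₃ := D.horiz.one (D.horiz.tgt c)) (s₄ := c)
    h1 (by rw [D.horiz.src_one]) h3
    (by rw [D.vert.src_one])
  rw [D.horiz.one_comp c, D.vert.one_comp c] at key
  exact key
end

section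
/- Let (S;H,V;M) be a set-theoretic double groupoid with core C. Let c ∈ C, and set v = β̃_H(c) ∈ V and h = β̃_V(c) ∈ H. Write c^{-1(H)} for the inverse of c in the horizontal groupoid S ⇉ V and c^{-1(V)} for its inverse in the vertical groupoid S ⇉ H. Then both composites c^{-1(H)} ∘_V 1̃^H_{v^{-1}} and c^{-1(V)} ∘_H 1̃^V_{h^{-1}} are defined, they are equal, and the resulting element lies in C, with α_C of it equal to β_C(c) and β_C of it equal to α_C(c). -/
/-- In any set-theoretic groupoid, the inverse of an identity is that identity. -/
theorem GpdOn.inv_one {S B : Type*} (G : GpdOn S B) (b : B) :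
    G.inv (G.one b) = G.one b := by
  have h1 : G.comp (G.one b) (G.inv (G.one b)) = G.one (G.tgt (G.one b)) :=
    G.comp_inv (G.one b)
  have h2 : G.comp (G.one (G.tgt (G.inv (G.one b)))) (G.inv (G.one b)) =
      G.inv (G.one b) := G.one_comp _
  rw [G.tgt_inv, G.src_one] at h2
  rw [h2, G.tgt_one] at h1
  exact h1

/-- For a core element `c`, setting `v = β̃_H(c)` and `h = β̃_V(c)`,
both composites `c^{-1(H)} ∘_V 1̃^H_{v⁻¹}` and `c^{-1(V)} ∘_H 1̃^V_{h⁻¹}` are defined,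
they are equal, the resulting element lies in the core, its core source is `β_C(c)`
and its core target is `α_C(c)`. -/
theorem doubleGpd_core_inv {S H V M : Type*} (D : DoubleGpd S H V M)
    {c : S} (hc : D.InCore c) :
    -- `c^{-1(H)} ∘_V 1̃^H_{v⁻¹}` is defined:
    (D.vert.src (D.horiz.inv c) =
        D.vert.tgt (D.horiz.one (D.vGpd.inv (D.horiz.tgt c))) ∧
    -- `c^{-1(V)} ∘_H 1̃^V_{h⁻¹}` is defined:
     D.horiz.src (D.vert.inv c) =
        D.horiz.tgt (D.vert.one (D.hGpd.inv (D.vert.tgt c)))) ∧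
    -- the two composites are equal:
    D.vert.comp (D.horiz.inv c) (D.horiz.one (D.vGpd.inv (D.horiz.tgt c))) =
      D.horiz.comp (D.vert.inv c) (D.vert.one (D.hGpd.inv (D.vert.tgt c))) ∧
    -- the result is a core element, with the expected source and target:
    D.InCore (D.coreInv c) ∧
    D.coreSrc (D.coreInv c) = D.coreTgt c ∧
    D.coreTgt (D.coreInv c) = D.coreSrc c := by
  obtain ⟨m, hsc, vsc⟩ := hc
  -- abbreviations as equalities
  have srcv : D.vGpd.src (D.horiz.tgt c) = m := by
    rw [D.horizTgt_hom.map_src c, vsc, D.hGpd.tgt_one]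
  have srch : D.hGpd.src (D.vert.tgt c) = m := by
    rw [D.vertTgt_hom.map_src c, hsc, D.vGpd.tgt_one]
  have tgth_eq : D.hGpd.tgt (D.vert.tgt c) = D.vGpd.tgt (D.horiz.tgt c) :=
    D.vertTgt_hom.map_tgt c
  -- composability of the first composite
  have def1 : D.vert.src (D.horiz.inv c) =
      D.vert.tgt (D.horiz.one (D.vGpd.inv (D.horiz.tgt c))) := by
    rw [D.horizInv_hom.map_src c, vsc, D.hGpd.inv_one,
      D.horizOne_hom.map_tgt, D.vGpd.tgt_inv, srcv]
  -- composability of the second composite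
  have def2 : D.horiz.src (D.vert.inv c) =
      D.horiz.tgt (D.vert.one (D.hGpd.inv (D.vert.tgt c))) := by
    rw [D.vertInv_hom.map_src c, hsc, D.vGpd.inv_one,
      D.vertOne_hom.map_tgt, D.hGpd.tgt_inv, srch]
  -- notation
  set X := D.vert.comp (D.horiz.inv c) (D.horiz.one (D.vGpd.inv (D.horiz.tgt c))) with hX
  set Y := D.horiz.comp (D.vert.inv c) (D.vert.one (D.hGpd.inv (D.vert.tgt c))) with hY
  -- interchange computation: Y ∘_V 1̃^H_v = c^{-1(H)}
  have Hinv_tgt : D.vert.tgt (D.horiz.inv c) = D.hGpd.inv (D.vert.tgt c) :=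
    D.horizInv_hom.map_tgt c
  have eqA : D.vert.comp Y (D.horiz.one (D.horiz.tgt c)) = D.horiz.inv c := by
    have hcv : D.horiz.comp c (D.horiz.inv c) = D.horiz.one (D.horiz.tgt c) :=
      D.horiz.comp_inv c
    rw [hY, ← hcv]
    rw [D.interchange def2 (by rw [D.horiz.tgt_inv])
      (by rw [D.vert.src_inv]) (by rw [D.vert.src_one, Hinv_tgt])]
    have e1 : D.vert.comp (D.vert.inv c) c = D.vert.one (D.vert.src c) :=
      D.vert.inv_comp c
    have e2 : D.vert.comp (D.vert.one (D.hGpd.inv (D.vert.tgt c))) (D.horiz.inv c)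
        = D.horiz.inv c := by
      rw [← Hinv_tgt]; exact D.vert.one_comp _
    rw [e1, e2, vsc, D.vertOne_hom.map_one]
    have e3 : D.vGpd.one m = D.horiz.tgt (D.horiz.inv c) := by
      rw [D.horiz.tgt_inv, hsc]
    rw [e3]
    exact D.horiz.one_comp _
  -- source of Y
  have srcY : D.vert.src Y = D.hGpd.one (D.hGpd.tgt (D.vert.tgt c)) := by
    rw [hY, D.vertSrc_hom.map_comp def2, D.vert.src_inv, D.vert.src_one,
      D.hGpd.comp_inv]
  -- the two composites agree
  have eq3 : X = Y := by
    rw [hX, ← D.vertInv_hom.map_one, ← eqA]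
    rw [D.vert.comp_assoc
      (by rw [srcY, D.horizOne_hom.map_tgt, tgth_eq])
      (by rw [D.vert.tgt_inv])]
    rw [D.vert.comp_inv]
    have : D.vert.tgt (D.horiz.one (D.horiz.tgt c)) = D.vert.src Y := by
      rw [srcY, D.horizOne_hom.map_tgt, tgth_eq]
    rw [this, D.vert.comp_one]
  -- sources of X
  have hsX : D.horiz.src X = D.vGpd.one (D.vGpd.tgt (D.horiz.tgt c)) := by
    rw [hX, D.horizSrc_hom.map_comp def1, D.horiz.src_inv, D.horiz.src_one,
      D.vGpd.comp_inv]
  have vsX : D.vert.src X = D.hGpd.one (D.vGpd.tgt (D.horiz.tgt c)) := by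
    rw [hX, D.vert.src_comp def1, D.horizOne_hom.map_src, D.vGpd.src_inv]
  have htX : D.horiz.tgt X = D.vGpd.inv (D.horiz.tgt c) := by
    rw [eq3, hY, D.horiz.tgt_comp def2, D.vertInv_hom.map_tgt]
  have hXcore : X = D.coreInv c := by rw [hX]; rfl
  refine ⟨⟨def1, def2⟩, eq3, ?_, ?_, ?_⟩
  · exact ⟨D.vGpd.tgt (D.horiz.tgt c), by rw [← hXcore]; exact hsX,
      by rw [← hXcore]; exact vsX⟩
  · show D.vGpd.src (D.horiz.src (D.coreInv c)) = _
    rw [← hXcore, hsX, D.vGpd.src_one]; rfl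
  · show D.vGpd.tgt (D.horiz.tgt (D.coreInv c)) = _
    rw [← hXcore, htX, D.vGpd.tgt_inv, srcv]
    show _ = D.vGpd.src (D.horiz.src c)
    rw [hsc, D.vGpd.src_one]
end

section
/- Let (S;H,V;M) be a set-theoretic double groupoid with core C. Then C is a groupoid with object set M, with source α_C, target β_C, composition c' ⊡ c = (c' ∘_H 1̃^V_{h₂}) ∘_V c (defined when α_C(c') = β_C(c), where h₂ = β̃_V(c)), identities 1^C_m = 1²_m, and inversion c ↦ c^{-1(H)} ∘_V 1̃^H_{v^{-1}} (where v = β̃_H(c) and c^{-1(H)} is the inverse of c in the horizontal groupoid S ⇉ V). -/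
theorem GpdOn.one_comp_one {S B : Type*} (G : GpdOn S B) (b : B) :
    G.comp (G.one b) (G.one b) = G.one b := by
  have := G.one_comp (G.one b)
  rwa [G.tgt_one] at this

namespace DoubleGpd

variable {S H V M : Type*} {D : DoubleGpd S H V M} {c c' c₁ c₂ c₃ : S}

theorem InCore.hsrc (hc : D.InCore c) :
    D.horiz.src c = D.vGpd.one (D.coreSrc c) := by
  obtain ⟨m, h1, h2⟩ := hc
  have : D.coreSrc c = m := by rw [coreSrc, h1, D.vGpd.src_one]
  rw [this, h1]

theorem InCore.vsrc (hc : D.InCore c) :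
    D.vert.src c = D.hGpd.one (D.coreSrc c) := by
  obtain ⟨m, h1, h2⟩ := hc
  have : D.coreSrc c = m := by rw [coreSrc, h1, D.vGpd.src_one]
  rw [this, h2]

/-- `α_H(β̃_V c) = α_C c` for a core element. -/
theorem InCore.hsrc_vtgt (hc : D.InCore c) :
    D.hGpd.src (D.vert.tgt c) = D.coreSrc c := by
  rw [← D.horizSrc_hom.map_tgt c, hc.hsrc, D.vGpd.tgt_one]

/-- `α_V(β̃_H c) = α_C c` for a core element. -/
theorem InCore.vsrc_htgt (hc : D.InCore c) :
    D.vGpd.src (D.horiz.tgt c) = D.coreSrc c := by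
  rw [D.horizTgt_hom.map_src c, hc.vsrc, D.hGpd.tgt_one]

/-- `β_C c = β_H (β̃_V c)` for a core element. -/
theorem InCore.coreTgt_eq (hc : D.InCore c) :
    D.coreTgt c = D.hGpd.tgt (D.vert.tgt c) := by
  rw [coreTgt, D.horizTgt_hom.map_tgt c]

theorem incore_mk {m : M} (h1 : D.horiz.src c = D.vGpd.one m)
    (h2 : D.vert.src c = D.hGpd.one m) : D.InCore c := ⟨m, h1, h2⟩

/-! ### Double identities -/

theorem doubleOne_eq_horiz (m : M) :
    D.doubleOne m = D.horiz.one (D.vGpd.one m) := D.vertOne_hom.map_one m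

theorem incore_doubleOne (m : M) : D.InCore (D.doubleOne m) := by
  refine ⟨m, ?_, ?_⟩
  · rw [doubleOne, D.vertOne_hom.map_src, D.hGpd.src_one]
  · rw [doubleOne, D.vert.src_one]

theorem coreSrc_doubleOne (m : M) : D.coreSrc (D.doubleOne m) = m := by
  rw [coreSrc, doubleOne, D.vertOne_hom.map_src, D.hGpd.src_one, D.vGpd.src_one]

theorem coreTgt_doubleOne (m : M) : D.coreTgt (D.doubleOne m) = m := by
  rw [coreTgt, doubleOne, D.vertOne_hom.map_tgt, D.hGpd.tgt_one, D.vGpd.tgt_one]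

/-! ### Composition -/

section Comp

/-- composability for the horizontal factor in the core composition. -/
theorem comp_aux_hH (hc' : D.InCore c') (hc : D.InCore c)
    (hcc : D.coreSrc c' = D.coreTgt c) : D.horiz.src c' = D.horiz.tgt (D.vert.one (D.vert.tgt c)) := by
  rw [hc'.hsrc, D.vertOne_hom.map_tgt, hcc, hc.coreTgt_eq]

/-- composability for the vertical factor in the core composition. -/
theorem comp_aux_hV (hc' : D.InCore c') (hc : D.InCore c)
    (hcc : D.coreSrc c' = D.coreTgt c) :
    D.vert.src (D.horiz.comp c' (D.vert.one (D.vert.tgt c))) = D.vert.tgt c := by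
  rw [D.vertSrc_hom.map_comp (comp_aux_hH hc' hc hcc), hc'.vsrc, D.vert.src_one,
    hcc, hc.coreTgt_eq, D.hGpd.one_comp]

theorem hsrc_coreComp (hc' : D.InCore c') (hc : D.InCore c)
    (hcc : D.coreSrc c' = D.coreTgt c) :
    D.horiz.src (D.coreComp c' c) = D.vGpd.one (D.coreSrc c) := by
  rw [coreComp, D.horizSrc_hom.map_comp (comp_aux_hV hc' hc hcc),
    D.horiz.src_comp (comp_aux_hH hc' hc hcc), D.vertOne_hom.map_src,
    hc.hsrc_vtgt, hc.hsrc, D.vGpd.one_comp_one]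

theorem vsrc_coreComp (hc' : D.InCore c') (hc : D.InCore c)
    (hcc : D.coreSrc c' = D.coreTgt c) :
    D.vert.src (D.coreComp c' c) = D.hGpd.one (D.coreSrc c) := by
  rw [coreComp, D.vert.src_comp (comp_aux_hV hc' hc hcc), hc.vsrc]

theorem incore_coreComp (hc' : D.InCore c') (hc : D.InCore c)
    (hcc : D.coreSrc c' = D.coreTgt c) : D.InCore (D.coreComp c' c) :=
  ⟨D.coreSrc c, hsrc_coreComp hc' hc hcc, vsrc_coreComp hc' hc hcc⟩

theorem coreSrc_coreComp (hc' : D.InCore c') (hc : D.InCore c)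
    (hcc : D.coreSrc c' = D.coreTgt c) : D.coreSrc (D.coreComp c' c) = D.coreSrc c := by
  rw [coreSrc, hsrc_coreComp hc' hc hcc, D.vGpd.src_one]

theorem coreTgt_coreComp (hc' : D.InCore c') (hc : D.InCore c)
    (hcc : D.coreSrc c' = D.coreTgt c) : D.coreTgt (D.coreComp c' c) = D.coreTgt c' := by
  rw [coreTgt, coreComp, D.horizTgt_hom.map_comp (comp_aux_hV hc' hc hcc),
    D.horiz.tgt_comp (comp_aux_hH hc' hc hcc), D.vGpd.tgt_comp, coreTgt]
  rw [hc'.vsrc_htgt, hcc, coreTgt]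

end Comp

/-! ### Identity laws -/

theorem coreComp_doubleOne (hc : D.InCore c) :
    D.coreComp c (D.doubleOne (D.coreSrc c)) = c := by
  have h1 : D.vert.tgt (D.doubleOne (D.coreSrc c)) = D.hGpd.one (D.coreSrc c) := by
    rw [doubleOne, D.vert.tgt_one]
  rw [coreComp, h1]
  have h2 : D.horiz.comp c (D.vert.one (D.hGpd.one (D.coreSrc c))) = c := by
    rw [show D.vert.one (D.hGpd.one (D.coreSrc c)) = D.horiz.one (D.horiz.src c) by
      rw [hc.hsrc]; exact D.vertOne_hom.map_one _]
    exact D.horiz.comp_one c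
  rw [h2, show (D.doubleOne (D.coreSrc c)) = D.vert.one (D.vert.src c) by
    rw [hc.vsrc]; rfl]
  exact D.vert.comp_one c

theorem doubleOne_coreComp (hc : D.InCore c) :
    D.coreComp (D.doubleOne (D.coreTgt c)) c = c := by
  rw [coreComp, doubleOne]
  have h1 : D.horiz.comp (D.vert.one (D.hGpd.one (D.coreTgt c)))
      (D.vert.one (D.vert.tgt c)) = D.vert.one (D.vert.tgt c) := by
    rw [← D.vertOne_hom.map_comp (by rw [D.hGpd.src_one, hc.coreTgt_eq]),
      hc.coreTgt_eq, D.hGpd.one_comp]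
  rw [h1, D.vert.one_comp]

/-! ### Inversion -/

section Inv

/-- composability of the two factors of the core inverse. -/
theorem inv_aux_hVi (hc : D.InCore c) :
    D.vert.src (D.horiz.inv c) =
      D.vert.tgt (D.horiz.one (D.vGpd.inv (D.horiz.tgt c))) := by
  rw [D.horizInv_hom.map_src, hc.vsrc, D.hGpd.inv_one,
    D.horizOne_hom.map_tgt, D.vGpd.tgt_inv, hc.vsrc_htgt]

theorem hsrc_coreInv (hc : D.InCore c) :
    D.horiz.src (D.coreInv c) = D.vGpd.one (D.coreTgt c) := by
  rw [coreInv, D.horizSrc_hom.map_comp (inv_aux_hVi hc), D.horiz.src_inv,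
    D.horiz.src_one, D.vGpd.comp_inv, coreTgt]

theorem vsrc_coreInv (hc : D.InCore c) :
    D.vert.src (D.coreInv c) = D.hGpd.one (D.coreTgt c) := by
  rw [coreInv, D.vert.src_comp (inv_aux_hVi hc), D.horizOne_hom.map_src,
    D.vGpd.src_inv, coreTgt]

theorem incore_coreInv (hc : D.InCore c) : D.InCore (D.coreInv c) :=
  ⟨D.coreTgt c, hsrc_coreInv hc, vsrc_coreInv hc⟩

theorem coreSrc_coreInv (hc : D.InCore c) : D.coreSrc (D.coreInv c) = D.coreTgt c := by
  rw [coreSrc, hsrc_coreInv hc, D.vGpd.src_one]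

theorem coreTgt_coreInv (hc : D.InCore c) : D.coreTgt (D.coreInv c) = D.coreSrc c := by
  rw [coreTgt, coreInv, D.horizTgt_hom.map_comp (inv_aux_hVi hc),
    D.horiz.tgt_inv, D.horiz.tgt_one, hc.hsrc]
  rw [show D.vGpd.one (D.coreSrc c) =
    D.vGpd.one (D.vGpd.tgt (D.vGpd.inv (D.horiz.tgt c))) by
      rw [D.vGpd.tgt_inv, hc.vsrc_htgt]]
  rw [D.vGpd.one_comp, D.vGpd.tgt_inv, hc.vsrc_htgt]

theorem coreComp_coreInv (hc : D.InCore c) :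
    D.coreComp c (D.coreInv c) = D.doubleOne (D.coreTgt c) := by
  set m := D.coreSrc c with hm
  set h := D.vert.tgt c with hh
  set v := D.horiz.tgt c with hv
  -- the vertical target of the core inverse is `h⁻¹`
  have htgtI : D.vert.tgt (D.coreInv c) = D.hGpd.inv h := by
    rw [coreInv, D.vert.tgt_comp (inv_aux_hVi hc), D.horizInv_hom.map_tgt]
  rw [coreComp, htgtI, coreInv]
  -- composability of `c` and `1̃ᵥ(h⁻¹)` horizontally
  have hX : D.horiz.src c = D.horiz.tgt (D.vert.one (D.hGpd.inv h)) := by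
    rw [hc.hsrc, D.vertOne_hom.map_tgt, D.hGpd.tgt_inv, hc.hsrc_vtgt]
  -- `Sv.src X = h⁻¹`
  have hSvX : D.vert.src (D.horiz.comp c (D.vert.one (D.hGpd.inv h))) =
      D.hGpd.inv h := by
    rw [D.vertSrc_hom.map_comp hX, hc.vsrc, D.vert.src_one]
    rw [show D.hGpd.one m = D.hGpd.one (D.hGpd.tgt (D.hGpd.inv h)) by
      rw [D.hGpd.tgt_inv, hc.hsrc_vtgt]]
    exact D.hGpd.one_comp _
  have hVTi : D.vert.tgt (D.horiz.inv c) = D.hGpd.inv h := by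
    rw [D.horizInv_hom.map_tgt]
  -- reassociate
  rw [← D.vert.comp_assoc (by rw [hSvX, hVTi]) (inv_aux_hVi hc)]
  -- rewrite `Sh.inv c` as `(doubleOne m) ∘_H (Sh.inv c)`
  have hdec : D.horiz.inv c =
      D.horiz.comp (D.doubleOne m) (D.horiz.inv c) := by
    rw [doubleOne_eq_horiz, show D.vGpd.one m = D.horiz.tgt (D.horiz.inv c) by
      rw [D.horiz.tgt_inv, hc.hsrc]]
    exact (D.horiz.one_comp _).symm
  -- interchange
  have hint := D.interchange (s₁ := c) (s₂ := D.vert.one (D.hGpd.inv h))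
    (s₃ := D.doubleOne m) (s₄ := D.horiz.inv c)
    hX
    (by rw [doubleOne_eq_horiz, D.horiz.src_one, D.horiz.tgt_inv, hc.hsrc])
    (by rw [hc.vsrc, doubleOne, D.vert.tgt_one])
    (by rw [D.vert.src_one, hVTi])
  rw [← hdec] at hint
  rw [hint]
  -- collapse the two vertical compositions
  have e1 : D.vert.comp c (D.doubleOne m) = c := by
    rw [doubleOne, show D.hGpd.one m = D.vert.src c from hc.vsrc.symm]
    exact D.vert.comp_one c
  have e2 : D.vert.comp (D.vert.one (D.hGpd.inv h)) (D.horiz.inv c) =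
      D.horiz.inv c := by
    rw [show D.hGpd.inv h = D.vert.tgt (D.horiz.inv c) from hVTi.symm]
    exact D.vert.one_comp _
  rw [e1, e2, D.horiz.comp_inv]
  -- now `Sv.comp (Sh.one v) (Sh.one v⁻¹) = Sh.one (1_V (tgt v)) = doubleOne _`
  rw [← D.horizOne_hom.map_comp (by rw [D.vGpd.tgt_inv]), D.vGpd.comp_inv,
    doubleOne_eq_horiz, coreTgt]

/-! ### Associativity -/

theorem coreComp_assoc (hc₃ : D.InCore c₃) (hc₂ : D.InCore c₂) (hc₁ : D.InCore c₁)
    (h32 : D.coreSrc c₃ = D.coreTgt c₂) (h21 : D.coreSrc c₂ = D.coreTgt c₁) :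
    D.coreComp (D.coreComp c₃ c₂) c₁ = D.coreComp c₃ (D.coreComp c₂ c₁) := by
  set h₁ := D.vert.tgt c₁ with hh₁
  set h₂ := D.vert.tgt c₂ with hh₂
  set Q := D.horiz.comp c₃ (D.vert.one h₂) with hQ
  have hH32 : D.horiz.src c₃ = D.horiz.tgt (D.vert.one h₂) := comp_aux_hH hc₃ hc₂ h32
  have hV32 : D.vert.src Q = h₂ := comp_aux_hV hc₃ hc₂ h32
  have hH21 : D.horiz.src c₂ = D.horiz.tgt (D.vert.one h₁) := comp_aux_hH hc₂ hc₁ h21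
  have hV21 : D.vert.src (D.horiz.comp c₂ (D.vert.one h₁)) = h₁ :=
    comp_aux_hV hc₂ hc₁ h21
  -- the outer `one` on the LHS is at `h₁`
  have houter : D.vert.tgt (D.coreComp c₂ c₁) = D.hGpd.comp h₂ h₁ := by
    rw [coreComp, D.vert.tgt_comp hV21, D.vertTgt_hom.map_comp hH21, D.vert.tgt_one]
  have lhs_eq : D.coreComp (D.coreComp c₃ c₂) c₁ =
      D.vert.comp (D.horiz.comp (D.coreComp c₃ c₂) (D.vert.one h₁)) c₁ := rfl
  have rhs_eq : D.coreComp c₃ (D.coreComp c₂ c₁) =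
      D.vert.comp (D.horiz.comp c₃ (D.vert.one (D.vert.tgt (D.coreComp c₂ c₁))))
        (D.coreComp c₂ c₁) := rfl
  rw [lhs_eq, rhs_eq, houter]
  -- interchange on the LHS horizontal factor
  have hsplit : D.vert.one h₁ = D.vert.comp (D.vert.one h₁) (D.vert.one h₁) := by
    have := D.vert.comp_one (D.vert.one h₁)
    rw [D.vert.src_one] at this
    exact this.symm
  have hint := D.interchange (s₁ := Q) (s₂ := D.vert.one h₁)
    (s₃ := c₂) (s₄ := D.vert.one h₁)
    (by rw [hQ, D.horiz.src_comp hH32, D.vertOne_hom.map_src,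
        D.vertOne_hom.map_tgt, hc₂.hsrc_vtgt, h21, hc₁.coreTgt_eq])
    hH21
    (by rw [hV32, hh₂])
    (by rw [D.vert.src_one, D.vert.tgt_one])
  have key : D.horiz.comp (D.coreComp c₃ c₂) (D.vert.one h₁) =
      D.vert.comp (D.horiz.comp Q (D.vert.one h₁))
        (D.horiz.comp c₂ (D.vert.one h₁)) := by
    have unf : D.coreComp c₃ c₂ = D.vert.comp Q c₂ := rfl
    rw [unf]
    conv_lhs => rw [hsplit]
    rw [← hint]
  rw [key]
  -- reassociate vertically
  rw [D.vert.comp_assoc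
    (by rw [D.vertSrc_hom.map_comp (by rw [hQ, D.horiz.src_comp hH32,
        D.vertOne_hom.map_src, D.vertOne_hom.map_tgt, hc₂.hsrc_vtgt, h21,
        hc₁.coreTgt_eq]), hV32, D.vert.src_one,
        D.vertTgt_hom.map_comp hH21, D.vert.tgt_one])
    hV21]
  have fold : D.vert.comp (D.horiz.comp c₂ (D.vert.one h₁)) c₁ =
      D.coreComp c₂ c₁ := rfl
  rw [fold]
  -- finally identify the horizontal factors
  congr 1
  rw [hQ, D.horiz.comp_assoc hH32
    (by rw [D.vertOne_hom.map_src, D.vertOne_hom.map_tgt, hc₂.hsrc_vtgt, h21,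
      hc₁.coreTgt_eq]),
    ← D.vertOne_hom.map_comp (by rw [hc₂.hsrc_vtgt, h21, hc₁.coreTgt_eq])]

/-- left inverse law, derived from the right inverse law by the idempotent trick. -/
theorem coreInv_coreComp (hc : D.InCore c) :
    D.coreComp (D.coreInv c) c = D.doubleOne (D.coreSrc c) := by
  have hct : D.InCore (D.coreInv c) := incore_coreInv hc
  have htc : D.coreSrc (D.coreInv c) = D.coreTgt c := coreSrc_coreInv hc
  have ha : D.InCore (D.coreComp (D.coreInv c) c) := incore_coreComp hct hc htc
  have hsa : D.coreSrc (D.coreComp (D.coreInv c) c) = D.coreSrc c :=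
    coreSrc_coreComp hct hc htc
  have hta : D.coreTgt (D.coreComp (D.coreInv c) c) = D.coreSrc c := by
    rw [coreTgt_coreComp hct hc htc, coreTgt_coreInv hc]
  set a := D.coreComp (D.coreInv c) c with hadef
  -- `a` is idempotent
  have hca : D.coreSrc c = D.coreTgt a := by rw [hta]
  have idem : D.coreComp a a = a := by
    conv_lhs => rw [hadef]
    rw [coreComp_assoc hct hc ha htc hca]
    rw [show D.coreComp c a = c by
      rw [hadef, ← coreComp_assoc hc hct hc (by rw [coreTgt_coreInv hc]) htc,
        coreComp_coreInv hc, doubleOne_coreComp hc]]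
  -- multiply by the inverse of `a` on the right
  have h5 : D.coreComp (D.coreComp a a) (D.coreInv a) =
      D.coreComp a (D.coreInv a) := by rw [idem]
  rw [coreComp_assoc ha ha (incore_coreInv ha) (by rw [hsa, hta])
      (by rw [coreTgt_coreInv ha]), coreComp_coreInv ha, hta, ← hsa,
    coreComp_doubleOne ha, hsa] at h5
  exact h5

end Inv

/-! ### The core groupoid -/

open Classical in
/-- The total composition map of the core groupoid (junk value on
non-composable pairs). -/
noncomputable def coreGpdComp (D : DoubleGpd S H V M) (c' c : D.Core) : D.Core :=
  if h : D.coreSrc c'.val = D.coreTgt c.val then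
    ⟨D.coreComp c'.val c.val, incore_coreComp c'.2 c.2 h⟩
  else c'

theorem coreGpdComp_eq {c' c : D.Core} (h : D.coreSrc c'.val = D.coreTgt c.val) :
    coreGpdComp D c' c = ⟨D.coreComp c'.val c.val, incore_coreComp c'.2 c.2 h⟩ :=
  dif_pos h

/-- The core groupoid of a double groupoid. -/
noncomputable def coreGpd (D : DoubleGpd S H V M) : GpdOn D.Core M where
  src c := D.coreSrc c.val
  tgt c := D.coreTgt c.val
  comp := coreGpdComp D
  one m := ⟨D.doubleOne m, incore_doubleOne m⟩
  inv c := ⟨D.coreInv c.val, incore_coreInv c.2⟩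
  src_comp {c' c} h := by
    rw [coreGpdComp_eq h]
    exact coreSrc_coreComp c'.2 c.2 h
  tgt_comp {c' c} h := by
    rw [coreGpdComp_eq h]
    exact coreTgt_coreComp c'.2 c.2 h
  src_one m := coreSrc_doubleOne m
  tgt_one m := coreTgt_doubleOne m
  comp_one c := by
    have h : D.coreSrc c.val = D.coreTgt (D.doubleOne (D.coreSrc c.val)) :=
      (coreTgt_doubleOne _).symm
    rw [coreGpdComp_eq h]
    exact Subtype.ext (coreComp_doubleOne c.2)
  one_comp c := by
    have h : D.coreSrc (D.doubleOne (D.coreTgt c.val)) = D.coreTgt c.val :=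
      coreSrc_doubleOne _
    rw [coreGpdComp_eq h]
    exact Subtype.ext (doubleOne_coreComp c.2)
  src_inv c := coreSrc_coreInv c.2
  tgt_inv c := coreTgt_coreInv c.2
  comp_inv c := by
    have h : D.coreSrc c.val = D.coreTgt (D.coreInv c.val) :=
      (coreTgt_coreInv c.2).symm
    rw [coreGpdComp_eq h]
    exact Subtype.ext (coreComp_coreInv c.2)
  inv_comp c := by
    have h : D.coreSrc (D.coreInv c.val) = D.coreTgt c.val :=
      coreSrc_coreInv c.2
    rw [coreGpdComp_eq h]
    exact Subtype.ext (coreInv_coreComp c.2)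
  comp_assoc {c₃ c₂ c₁} h32 h21 := by
    rw [coreGpdComp_eq h32, coreGpdComp_eq h21]
    have hL : D.coreSrc (D.coreComp c₃.val c₂.val) = D.coreTgt c₁.val := by
      rw [coreSrc_coreComp c₃.2 c₂.2 h32]; exact h21
    have hR : D.coreSrc c₃.val = D.coreTgt (D.coreComp c₂.val c₁.val) := by
      rw [coreTgt_coreComp c₂.2 c₁.2 h21]; exact h32
    rw [coreGpdComp_eq hL, coreGpdComp_eq hR]
    exact Subtype.ext (coreComp_assoc c₃.2 c₂.2 c₁.2 h32 h21)

end DoubleGpd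

/-- The core `C` of a double groupoid `(S; H, V; M)` is a groupoid with
object set `M`, with source `α_C`, target `β_C`, composition
`c' ⊡ c = (c' ∘_H 1̃^V_{β̃_V c}) ∘_V c` (on composable pairs), identities `1²_m`, and
inversion `c ↦ c^{-1(H)} ∘_V 1̃^H_{(β̃_H c)⁻¹}`. -/
theorem doubleGpd_core_is_groupoid {S H V M : Type*} (D : DoubleGpd S H V M) :
    ∃ C : GpdOn D.Core M, IsCoreGpd D C := by
  refine ⟨DoubleGpd.coreGpd D, ?_, ?_, ?_, ?_, ?_⟩
  · intro c; rfl
  · intro c; rfl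
  · intro m; rfl
  · intro c' c h
    rw [show (DoubleGpd.coreGpd D).comp c' c = DoubleGpd.coreGpdComp D c' c from rfl,
      DoubleGpd.coreGpdComp_eq h]
  · intro c; rfl
end

section
/- Let (S;H,V;M) be a set-theoretic double groupoid with core groupoid C ⇉ M. Then the maps ∂_H : C → H, c ↦ β̃_V(c), and ∂_V : C → V, c ↦ β̃_H(c), are groupoid morphisms over the identity of M (from C ⇉ M to H ⇉ M and to V ⇉ M respectively). -/
namespace DoubleGpd

variable {S H V M : Type*} (D : DoubleGpd S H V M)

lemma coreSrc_eq_hsrc_vtgt {c : S} (hc : D.InCore c) :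
    D.coreSrc c = D.hGpd.src (D.vert.tgt c) := by
  obtain ⟨m, hh, hv⟩ := hc
  rw [coreSrc, hh, D.vGpd.src_one, ← D.horizSrc_hom.map_tgt, hh, D.vGpd.tgt_one]

lemma coreSrc_eq_vsrc_htgt {c : S} (hc : D.InCore c) :
    D.coreSrc c = D.vGpd.src (D.horiz.tgt c) := by
  obtain ⟨m, hh, hv⟩ := hc
  rw [coreSrc, hh, D.vGpd.src_one, D.horizTgt_hom.map_src, hv, D.hGpd.tgt_one]

lemma coreTgt_eq_htgt_vtgt (c : S) :
    D.coreTgt c = D.hGpd.tgt (D.vert.tgt c) := by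
  rw [coreTgt, D.horizTgt_hom.map_tgt]

lemma coreSrc_eq_self {c : S} {m : M} (hh : D.horiz.src c = D.vGpd.one m) :
    D.coreSrc c = m := by
  rw [coreSrc, hh, D.vGpd.src_one]

lemma horiz_compat {c' c : S} (hc' : D.InCore c') (h : D.coreSrc c' = D.coreTgt c) :
    D.horiz.src c' = D.horiz.tgt (D.vert.one (D.vert.tgt c)) := by
  obtain ⟨m, hh, hv⟩ := hc'
  rw [D.vertOne_hom.map_tgt, hh]
  congr 1
  rw [← D.coreSrc_eq_self hh, h, coreTgt_eq_htgt_vtgt]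

lemma vert_compat {c' c : S} (hc' : D.InCore c') (h : D.coreSrc c' = D.coreTgt c) :
    D.vert.src (D.horiz.comp c' (D.vert.one (D.vert.tgt c))) = D.vert.tgt c := by
  rw [D.vertSrc_hom.map_comp (D.horiz_compat hc' h), D.vert.src_one]
  obtain ⟨m, hh, hv⟩ := hc'
  have hm : m = D.hGpd.tgt (D.vert.tgt c) := by
    rw [← D.coreSrc_eq_self hh, h, coreTgt_eq_htgt_vtgt]
  rw [hv, hm, D.hGpd.one_comp]

end DoubleGpd

/-- The maps `∂_H : C → H, c ↦ β̃_V(c)` and `∂_V : C → V, c ↦ β̃_H(c)`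
are groupoid morphisms over the identity of `M` from the core groupoid `C ⇉ M` to
`H ⇉ M` and to `V ⇉ M` respectively. -/
theorem doubleGpd_core_boundary_maps {S H V M : Type*} (D : DoubleGpd S H V M)
    (C : GpdOn D.Core M) (hC : IsCoreGpd D C) :
    IsGpdHom C D.hGpd (fun c => D.vert.tgt c.val) (id : M → M) ∧
    IsGpdHom C D.vGpd (fun c => D.horiz.tgt c.val) (id : M → M) := by
  open DoubleGpd in
  constructor
  · refine ⟨?_, ?_, ?_, ?_⟩
    · intro c
      rw [hC.src_eq, id, D.coreSrc_eq_hsrc_vtgt c.2]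
    · intro c
      rw [hC.tgt_eq, id, D.coreTgt_eq_htgt_vtgt]
    · intro m
      rw [hC.one_eq, id]
      exact D.vert.tgt_one _
    · intro c' c hcc
      rw [hC.src_eq, hC.tgt_eq] at hcc
      rw [hC.comp_eq c' c hcc, DoubleGpd.coreComp,
        D.vert.tgt_comp (D.vert_compat c'.2 hcc),
        D.vertTgt_hom.map_comp (D.horiz_compat c'.2 hcc), D.vert.tgt_one]
  · refine ⟨?_, ?_, ?_, ?_⟩
    · intro c
      rw [hC.src_eq, id, D.coreSrc_eq_vsrc_htgt c.2]
    · intro c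
      rw [hC.tgt_eq, id]
      rfl
    · intro m
      rw [hC.one_eq, id, DoubleGpd.doubleOne, D.vertOne_hom.map_tgt, D.hGpd.tgt_one]
    · intro c' c hcc
      rw [hC.src_eq, hC.tgt_eq] at hcc
      rw [hC.comp_eq c' c hcc, DoubleGpd.coreComp,
        D.horizTgt_hom.map_comp (D.vert_compat c'.2 hcc),
        D.horiz.tgt_comp (D.horiz_compat c'.2 hcc)]
end

section
/- Let (φ;φ_H,φ_V;φ_M) : (S;H,V;M) → (S';H',V';M') be a morphism of set-theoretic double groupoids. Then φ maps the core C of S into the core C' of S'; the restriction φ_C : C → C' is a groupoid morphism over φ_M; and the core diagrams commute: ∂'_H ∘ φ_C = φ_H ∘ ∂_H and ∂'_V ∘ φ_C = φ_V ∘ ∂_V. -/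
/-- A morphism `(φ; φ_H, φ_V; φ_M)` of double groupoids maps the core of
`S` into the core of `S'`; the restriction `φ_C` is a groupoid morphism of the core
groupoids over `φ_M`, and the core diagrams commute:
`∂'_H ∘ φ_C = φ_H ∘ ∂_H` and `∂'_V ∘ φ_C = φ_V ∘ ∂_V`. -/
theorem doubleGpd_core_morphism {S H V M S' H' V' M' : Type*}
    (D : DoubleGpd S H V M) (D' : DoubleGpd S' H' V' M')
    (φ : S → S') (φH : H → H') (φV : V → V') (φM : M → M')
    (hmor : IsDoubleGpdHom D D' φ φH φV φM) :
    ∃ hmap : ∀ c : S, D.InCore c → D'.InCore (φ c),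
      ∀ (C : GpdOn D.Core M) (C' : GpdOn D'.Core M'),
        IsCoreGpd D C → IsCoreGpd D' C' →
        IsGpdHom C C' (fun c => ⟨φ c.val, hmap c.val c.prop⟩) φM ∧
        (∀ c : D.Core, D'.vert.tgt (φ c.val) = φH (D.vert.tgt c.val)) ∧
        (∀ c : D.Core, D'.horiz.tgt (φ c.val) = φV (D.horiz.tgt c.val)) := by
  refine ⟨fun c hc => ?_, fun C C' hC hC' => ?_⟩
  · obtain ⟨m, hh, hv⟩ := hc
    exact ⟨φM m, by rw [hmor.horiz_hom.map_src, hh, hmor.v_hom.map_one],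
      by rw [hmor.vert_hom.map_src, hv, hmor.h_hom.map_one]⟩
  · refine ⟨⟨?_, ?_, ?_, ?_⟩, fun c => hmor.vert_hom.map_tgt c.val,
      fun c => hmor.horiz_hom.map_tgt c.val⟩
    · intro c
      rw [hC'.src_eq, hC.src_eq]
      simp only [DoubleGpd.coreSrc, hmor.horiz_hom.map_src, hmor.v_hom.map_src]
    · intro c
      rw [hC'.tgt_eq, hC.tgt_eq]
      simp only [DoubleGpd.coreTgt, hmor.horiz_hom.map_tgt, hmor.v_hom.map_tgt]
    · intro m
      apply Subtype.ext
      show φ (C.one m).val = (C'.one (φM m)).val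
      rw [hC.one_eq, hC'.one_eq]
      simp only [DoubleGpd.doubleOne, hmor.vert_hom.map_one, hmor.h_hom.map_one]
    · intro c' c hcc
      rw [hC.src_eq, hC.tgt_eq] at hcc
      have hcc' : D'.coreSrc (φ c'.val) = D'.coreTgt (φ c.val) := by
        simp only [DoubleGpd.coreSrc, DoubleGpd.coreTgt, hmor.horiz_hom.map_src,
          hmor.horiz_hom.map_tgt, hmor.v_hom.map_src, hmor.v_hom.map_tgt]
        exact congrArg φM hcc
      apply Subtype.ext
      show φ (C.comp c' c).val = (C'.comp _ _).val
      rw [hC.comp_eq c' c hcc, hC'.comp_eq _ _ hcc']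
      obtain ⟨m', hh', hv'⟩ := c'.prop
      have hm' : m' = D.hGpd.tgt (D.vert.tgt c.val) := by
        have h1 : D.vGpd.src (D.horiz.src c'.val) = m' := by
          rw [hh', D.vGpd.src_one]
        have h2 := D.vertTgt_hom.map_tgt c.val
        have h3 := hcc
        simp only [DoubleGpd.coreSrc, DoubleGpd.coreTgt] at h3
        rw [h1] at h3
        rw [h3, ← h2]
      have h1 : D.horiz.src c'.val = D.horiz.tgt (D.vert.one (D.vert.tgt c.val)) := by
        rw [hh', D.horizTgt_hom.map_one, hm']
      have h2 : D.vert.src (D.horiz.comp c'.val (D.vert.one (D.vert.tgt c.val)))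
          = D.vert.tgt c.val := by
        rw [D.vertSrc_hom.map_comp h1, hv', D.vert.src_one]
        rw [hm'] at hv' ⊢
        exact D.hGpd.one_comp _
      simp only [DoubleGpd.coreComp]
      rw [hmor.vert_hom.map_comp h2, hmor.horiz_hom.map_comp h1,
        hmor.vert_hom.map_one, hmor.vert_hom.map_tgt]
end

section
/- Let (E;E^H,E^V;M) be a set-theoretic double vector bundle over a field 𝕜 with core K, and let (E^{*V};E^H,K*;M) and (E^{*H};K*,E^V;M) be its vertical and horizontal duals. For Φ ∈ E^{*V} of form (Φ;X,κ;m) and Ψ ∈ E^{*H} of form (Ψ;κ,x;m) (same κ ∈ K*_m), define ⟨Φ,Ψ⟩ = ⟨Ψ,ξ⟩ − ⟨Φ,ξ⟩, where ξ is any element of E of form (ξ;X,x;m). Then: (1) ⟨Φ,Ψ⟩ does not depend on the choice of ξ; (2) for fixed κ, the pairing is bilinear in Φ and Ψ; and (3) the pairing is nondegenerate: if ⟨Φ,Ψ⟩ = 0 for all Ψ over κ then Φ is the zero element of E^{*V} over κ, and symmetrically. Thus E^{*V} → K* and E^{*H} → K* are vector bundles in duality. -/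
/-- A set-theoretic vector bundle structure over `𝕜` on a set `E` with base set `B`:
all operations are total functions, and the vector space axioms are required
fibrewise (i.e. conditionally on equality of projections). -/
structure VBOn (𝕜 : Type*) [Field 𝕜] (E : Type*) (B : Type*) where
  proj : E → B
  add : E → E → E
  smul : 𝕜 → E → E
  zero : B → E
  proj_add : ∀ {e e' : E}, proj e = proj e' → proj (add e e') = proj e
  proj_smul : ∀ (t : 𝕜) (e : E), proj (smul t e) = proj e
  proj_zero : ∀ b, proj (zero b) = b
  add_assoc : ∀ {e₁ e₂ e₃ : E}, proj e₁ = proj e₂ → proj e₂ = proj e₃ →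
    add (add e₁ e₂) e₃ = add e₁ (add e₂ e₃)
  add_comm : ∀ {e e' : E}, proj e = proj e' → add e e' = add e' e
  zero_add : ∀ e, add (zero (proj e)) e = e
  add_neg : ∀ e, add e (smul (-1) e) = zero (proj e)
  one_smul : ∀ e, smul 1 e = e
  mul_smul : ∀ (s t : 𝕜) (e : E), smul (s * t) e = smul s (smul t e)
  smul_add : ∀ (t : 𝕜) {e e' : E}, proj e = proj e' →
    smul t (add e e') = add (smul t e) (smul t e')
  add_smul : ∀ (s t : 𝕜) (e : E), smul (s + t) e = add (smul s e) (smul t e)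

namespace VBOn

variable {𝕜 E B : Type*} [Field 𝕜]

theorem zero_smul' (v : VBOn 𝕜 E B) (e : E) : v.smul 0 e = v.zero (v.proj e) := by
  have h : (0 : 𝕜) = 1 + (-1) := by ring
  rw [h, v.add_smul, v.one_smul, v.add_neg]

theorem smul_zero' (v : VBOn 𝕜 E B) (t : 𝕜) (b : B) : v.smul t (v.zero b) = v.zero b := by
  have h0 : v.zero b = v.smul 0 (v.zero b) := by rw [v.zero_smul', v.proj_zero]
  rw [h0, ← v.mul_smul, mul_zero]

/-- The fibre of a set-theoretic vector bundle over a point of the base. -/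
def Fib (v : VBOn 𝕜 E B) (b : B) : Type _ := {e : E // v.proj e = b}

instance (v : VBOn 𝕜 E B) (b : B) : Zero (v.Fib b) :=
  ⟨⟨v.zero b, v.proj_zero b⟩⟩

instance (v : VBOn 𝕜 E B) (b : B) : Add (v.Fib b) :=
  ⟨fun e e' => ⟨v.add e.val e'.val, (v.proj_add (e.prop.trans e'.prop.symm)).trans e.prop⟩⟩

instance (v : VBOn 𝕜 E B) (b : B) : Neg (v.Fib b) :=
  ⟨fun e => ⟨v.smul (-1) e.val, (v.proj_smul _ _).trans e.prop⟩⟩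

instance (v : VBOn 𝕜 E B) (b : B) : SMul 𝕜 (v.Fib b) :=
  ⟨fun t e => ⟨v.smul t e.val, (v.proj_smul t e.val).trans e.prop⟩⟩

@[simp] theorem Fib.add_val (v : VBOn 𝕜 E B) {b : B} (e e' : v.Fib b) :
    (e + e').val = v.add e.val e'.val := rfl

@[simp] theorem Fib.zero_val (v : VBOn 𝕜 E B) {b : B} :
    (0 : v.Fib b).val = v.zero b := rfl

@[simp] theorem Fib.neg_val (v : VBOn 𝕜 E B) {b : B} (e : v.Fib b) :
    (-e).val = v.smul (-1) e.val := rfl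

@[simp] theorem Fib.smul_val (v : VBOn 𝕜 E B) {b : B} (t : 𝕜) (e : v.Fib b) :
    (t • e).val = v.smul t e.val := rfl

instance (v : VBOn 𝕜 E B) (b : B) : AddCommGroup (v.Fib b) where
  add_assoc e₁ e₂ e₃ := Subtype.ext (by
    show v.add (v.add e₁.val e₂.val) e₃.val = v.add e₁.val (v.add e₂.val e₃.val)
    exact v.add_assoc (e₁.prop.trans e₂.prop.symm) (e₂.prop.trans e₃.prop.symm))
  zero_add e := Subtype.ext (by
    show v.add (v.zero b) e.val = e.val
    have h := v.zero_add e.val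
    rwa [e.prop] at h)
  add_zero e := Subtype.ext (by
    show v.add e.val (v.zero b) = e.val
    rw [v.add_comm (e.prop.trans (v.proj_zero b).symm)]
    have h := v.zero_add e.val
    rwa [e.prop] at h)
  neg_add_cancel e := Subtype.ext (by
    show v.add (v.smul (-1) e.val) e.val = v.zero b
    rw [v.add_comm (v.proj_smul (-1) e.val), v.add_neg, e.prop])
  add_comm e e' := Subtype.ext (by
    show v.add e.val e'.val = v.add e'.val e.val
    exact v.add_comm (e.prop.trans e'.prop.symm))
  nsmul := nsmulRec
  zsmul := zsmulRec

instance (v : VBOn 𝕜 E B) (b : B) : Module 𝕜 (v.Fib b) where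
  one_smul e := Subtype.ext (v.one_smul e.val)
  mul_smul s t e := Subtype.ext (v.mul_smul s t e.val)
  smul_zero t := Subtype.ext (v.smul_zero' t b)
  zero_smul e := Subtype.ext (by
    show v.smul 0 e.val = v.zero b
    have h := v.zero_smul' e.val
    rwa [e.prop] at h)
  smul_add t e e' := Subtype.ext (by
    show v.smul t (v.add e.val e'.val) = v.add (v.smul t e.val) (v.smul t e'.val)
    exact v.smul_add t (e.prop.trans e'.prop.symm))
  add_smul s t e := Subtype.ext (v.add_smul s t e.val)

end VBOn

/-- A set-theoretic double vector bundle `(E; E^H, E^V; M)` over a field `𝕜`: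
side vector bundles `E^H` and `E^V` over `M` (families of `𝕜`-vector spaces) and a
set `E` with two set-theoretic vector bundle structures, `vbV` over (the total space
of) `E^H` — with projection `q̃_V`, addition `+_V` and zeros `0̃^V` — and `vbH` over
`E^V` — with projection `q̃_H`, addition `+_H` and zeros `0̃^H` — such that each
operation of either structure is a morphism of vector bundles with respect to the
other (in particular the interchange law holds), and the double projection
`E → E^H ×_M E^V` is surjective. -/
structure DVB (𝕜 : Type*) [Field 𝕜] {M : Type*} (E : Type*)
    (EH : M → Type*) (EV : M → Type*)
    [∀ m, AddCommGroup (EH m)] [∀ m, Module 𝕜 (EH m)]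
    [∀ m, AddCommGroup (EV m)] [∀ m, Module 𝕜 (EV m)] where
  /-- the vector bundle structure over `E^H`. -/
  vbV : VBOn 𝕜 E (Σ m, EH m)
  /-- the vector bundle structure over `E^V`. -/
  vbH : VBOn 𝕜 E (Σ m, EV m)
  /-- the two projections cover the same point of `M`. -/
  compat : ∀ (e : E) (m : M) (X : EH m), vbV.proj e = ⟨m, X⟩ →
    ∃ x : EV m, vbH.proj e = ⟨m, x⟩
  projH_addV : ∀ {e e' : E} {m : M} {y y' : EV m}, vbV.proj e = vbV.proj e' →
    vbH.proj e = ⟨m, y⟩ → vbH.proj e' = ⟨m, y'⟩ →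
    vbH.proj (vbV.add e e') = ⟨m, y + y'⟩
  projH_smulV : ∀ (t : 𝕜) {e : E} {m : M} {y : EV m}, vbH.proj e = ⟨m, y⟩ →
    vbH.proj (vbV.smul t e) = ⟨m, t • y⟩
  projH_zeroV : ∀ (m : M) (X : EH m), vbH.proj (vbV.zero ⟨m, X⟩) = ⟨m, (0 : EV m)⟩
  projV_addH : ∀ {e e' : E} {m : M} {Y Y' : EH m}, vbH.proj e = vbH.proj e' →
    vbV.proj e = ⟨m, Y⟩ → vbV.proj e' = ⟨m, Y'⟩ →
    vbV.proj (vbH.add e e') = ⟨m, Y + Y'⟩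
  projV_smulH : ∀ (t : 𝕜) {e : E} {m : M} {Y : EH m}, vbV.proj e = ⟨m, Y⟩ →
    vbV.proj (vbH.smul t e) = ⟨m, t • Y⟩
  projV_zeroH : ∀ (m : M) (x : EV m), vbV.proj (vbH.zero ⟨m, x⟩) = ⟨m, (0 : EH m)⟩
  zeroV_add : ∀ (m : M) (X X' : EH m),
    vbV.zero ⟨m, X + X'⟩ = vbH.add (vbV.zero ⟨m, X⟩) (vbV.zero ⟨m, X'⟩)
  zeroV_smul : ∀ (m : M) (t : 𝕜) (X : EH m),
    vbV.zero ⟨m, t • X⟩ = vbH.smul t (vbV.zero ⟨m, X⟩)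
  zeroH_add : ∀ (m : M) (x x' : EV m),
    vbH.zero ⟨m, x + x'⟩ = vbV.add (vbH.zero ⟨m, x⟩) (vbH.zero ⟨m, x'⟩)
  zeroH_smul : ∀ (m : M) (t : 𝕜) (x : EV m),
    vbH.zero ⟨m, t • x⟩ = vbV.smul t (vbH.zero ⟨m, x⟩)
  double_zero : ∀ m : M, vbV.zero ⟨m, (0 : EH m)⟩ = vbH.zero ⟨m, (0 : EV m)⟩
  /-- the interchange law `(ξ₁ +_V ξ₂) +_H (ξ₃ +_V ξ₄) = (ξ₁ +_H ξ₃) +_V (ξ₂ +_H ξ₄)`. -/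
  interchange : ∀ {e₁ e₂ e₃ e₄ : E}, vbV.proj e₁ = vbV.proj e₂ →
    vbV.proj e₃ = vbV.proj e₄ → vbH.proj e₁ = vbH.proj e₃ → vbH.proj e₂ = vbH.proj e₄ →
    vbH.add (vbV.add e₁ e₂) (vbV.add e₃ e₄) = vbV.add (vbH.add e₁ e₃) (vbH.add e₂ e₄)
  smulV_addH : ∀ (t : 𝕜) {e e' : E}, vbH.proj e = vbH.proj e' →
    vbV.smul t (vbH.add e e') = vbH.add (vbV.smul t e) (vbV.smul t e')
  smulH_addV : ∀ (t : 𝕜) {e e' : E}, vbV.proj e = vbV.proj e' →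
    vbH.smul t (vbV.add e e') = vbV.add (vbH.smul t e) (vbH.smul t e')
  smul_commute : ∀ (s t : 𝕜) (e : E), vbV.smul s (vbH.smul t e) = vbH.smul t (vbV.smul s e)
  /-- surjectivity of the double projection. -/
  double_surj : ∀ (m : M) (X : EH m) (x : EV m),
    ∃ e : E, vbV.proj e = ⟨m, X⟩ ∧ vbH.proj e = ⟨m, x⟩

namespace DVB

variable {𝕜 M E : Type*} [Field 𝕜] {EH EV : M → Type*}
  [∀ m, AddCommGroup (EH m)] [∀ m, Module 𝕜 (EH m)]
  [∀ m, AddCommGroup (EV m)] [∀ m, Module 𝕜 (EV m)]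

/-- The core of a double vector bundle, as a submodule of the fibre of `E → E^H`
over `0 ∈ E^H_m`: the elements projecting to the two zeros over `m`. -/
def Core (D : DVB 𝕜 E EH EV) (m : M) :
    Submodule 𝕜 (D.vbV.Fib ⟨m, (0 : EH m)⟩) where
  carrier := {e | D.vbH.proj e.val = ⟨m, (0 : EV m)⟩}
  add_mem' := by
    intro a b ha hb
    have h := D.projH_addV (a.prop.trans b.prop.symm) ha hb
    simpa using h
  zero_mem' := by
    simpa using D.projH_zeroV m 0
  smul_mem' := by
    intro t a ha
    have h := D.projH_smulV t ha
    simpa using h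

/-- The core fibre at `m`, as a type. -/
abbrev CoreT (D : DVB 𝕜 E EH EV) (m : M) : Type _ := ↥(D.Core m)

theorem mem_core_iff (D : DVB 𝕜 E EH EV) {m : M} (e : D.vbV.Fib ⟨m, (0 : EH m)⟩) :
    e ∈ D.Core m ↔ D.vbH.proj e.val = ⟨m, (0 : EV m)⟩ := Iff.rfl

theorem core_projH (D : DVB 𝕜 E EH EV) {m : M} (k : D.CoreT m) :
    D.vbH.proj k.val.val = ⟨m, (0 : EV m)⟩ := k.prop

theorem core_projV (D : DVB 𝕜 E EH EV) {m : M} (k : D.CoreT m) :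
    D.vbV.proj k.val.val = ⟨m, (0 : EH m)⟩ := k.val.prop

theorem zeroV_addH_core_mem (D : DVB 𝕜 E EH EV) {m : M} (X : EH m) (k : D.CoreT m) :
    D.vbV.proj (D.vbH.add (D.vbV.zero ⟨m, X⟩) k.val.val) = ⟨m, X⟩ := by
  have h1 : D.vbH.proj (D.vbV.zero ⟨m, X⟩) = ⟨m, (0 : EV m)⟩ := D.projH_zeroV m X
  have h := D.projV_addH (h1.trans (D.core_projH k).symm)
    (D.vbV.proj_zero ⟨m, X⟩) (D.core_projV k)
  simpa using h

theorem zeroH_addV_core_mem (D : DVB 𝕜 E EH EV) {m : M} (x : EV m) (k : D.CoreT m) :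
    D.vbH.proj (D.vbV.add (D.vbH.zero ⟨m, x⟩) k.val.val) = ⟨m, x⟩ := by
  have h1 : D.vbV.proj (D.vbH.zero ⟨m, x⟩) = ⟨m, (0 : EH m)⟩ := D.projV_zeroH m x
  have h := D.projH_addV (h1.trans (D.core_projV k).symm)
    (D.vbH.proj_zero ⟨m, x⟩) (D.core_projH k)
  simpa using h

/-- The projection `q̃_V^{(*)} : E^{*V} → K*` of the vertical dual, as a bare pairing:
`⟨q̃_V^{(*)}(Φ), k⟩ = ⟨Φ, 0̃^V_X +_H k̄⟩`. -/
def evCoreV (D : DVB 𝕜 E EH EV) {m : M} {X : EH m}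
    (Φ : Module.Dual 𝕜 (D.vbV.Fib ⟨m, X⟩)) (k : D.CoreT m) : 𝕜 :=
  Φ ⟨D.vbH.add (D.vbV.zero ⟨m, X⟩) k.val.val, D.zeroV_addH_core_mem X k⟩

/-- The projection `q̃_H^{(*)} : E^{*H} → K*` of the horizontal dual, as a bare
pairing: `⟨q̃_H^{(*)}(Ψ), k⟩ = ⟨Ψ, 0̃^H_x +_V k̄⟩`. -/
def evCoreH (D : DVB 𝕜 E EH EV) {m : M} {x : EV m}
    (Ψ : Module.Dual 𝕜 (D.vbH.Fib ⟨m, x⟩)) (k : D.CoreT m) : 𝕜 :=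
  Ψ ⟨D.vbV.add (D.vbH.zero ⟨m, x⟩) k.val.val, D.zeroH_addV_core_mem x k⟩

end DVB

/-- `W` (with evaluation pairing `ev`) is *the* vertical dual
`(E^{*V}; E^H, K*; M)` of the double vector bundle `D = (E; E^H, E^V; M)`:
its fibre over `X ∈ E^H_m` is the dual of the fibre `q̃_V^{-1}(X)` (expressed via the
evaluation `ev` and the representability condition), its projection to `K*` is given
by `⟨q̃_V^{(*)}(Φ), k⟩ = ⟨Φ, 0̃^V_X +_H k̄⟩`, and its bundle operations over `K*` are
characterized by `⟨Φ ∔ Φ', ξ +_H ξ'⟩ = ⟨Φ, ξ⟩ + ⟨Φ', ξ'⟩` and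
`⟨t ∙ Φ, t ·_H ξ⟩ = t⟨Φ, ξ⟩`. -/
structure IsVDualDVB {𝕜 M E : Type*} [Field 𝕜] {EH EV : M → Type*}
    [∀ m, AddCommGroup (EH m)] [∀ m, Module 𝕜 (EH m)]
    [∀ m, AddCommGroup (EV m)] [∀ m, Module 𝕜 (EV m)]
    (D : DVB 𝕜 E EH EV) {F : Type*}
    (W : DVB 𝕜 F EH (fun m => Module.Dual 𝕜 (D.CoreT m)))
    (ev : F → E → 𝕜) : Prop where
  ev_addV : ∀ {m : M} {X : EH m} {Φ : F}, W.vbV.proj Φ = ⟨m, X⟩ →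
    ∀ {ξ ξ' : E}, D.vbV.proj ξ = ⟨m, X⟩ → D.vbV.proj ξ' = ⟨m, X⟩ →
    ev Φ (D.vbV.add ξ ξ') = ev Φ ξ + ev Φ ξ'
  ev_smulV : ∀ {m : M} {X : EH m} {Φ : F}, W.vbV.proj Φ = ⟨m, X⟩ →
    ∀ (t : 𝕜) {ξ : E}, D.vbV.proj ξ = ⟨m, X⟩ →
    ev Φ (D.vbV.smul t ξ) = t * ev Φ ξ
  addV_ev : ∀ {Φ Φ' : F}, W.vbV.proj Φ = W.vbV.proj Φ' →
    ∀ {ξ : E}, D.vbV.proj ξ = W.vbV.proj Φ →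
    ev (W.vbV.add Φ Φ') ξ = ev Φ ξ + ev Φ' ξ
  smulV_ev : ∀ (t : 𝕜) {Φ : F} {ξ : E}, D.vbV.proj ξ = W.vbV.proj Φ →
    ev (W.vbV.smul t Φ) ξ = t * ev Φ ξ
  /-- the fibre of `W` over `X` is exactly the dual space of the fibre of `E` over `X`. -/
  represent : ∀ (m : M) (X : EH m) (f : Module.Dual 𝕜 (D.vbV.Fib ⟨m, X⟩)),
    ∃! Φ : W.vbV.Fib ⟨m, X⟩, ∀ ξ : D.vbV.Fib ⟨m, X⟩, ev Φ.val ξ.val = f ξ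
  /-- the projection to `K*` is `⟨q̃_V^{(*)}(Φ), k⟩ = ⟨Φ, 0̃^V_X +_H k̄⟩`. -/
  proj_hat : ∀ {m : M} {X : EH m} {Φ : F}, W.vbV.proj Φ = ⟨m, X⟩ →
    ∀ {κ : Module.Dual 𝕜 (D.CoreT m)}, W.vbH.proj Φ = ⟨m, κ⟩ →
    ∀ k : D.CoreT m, κ k = ev Φ (D.vbH.add (D.vbV.zero ⟨m, X⟩) k.val.val)
  hat_add : ∀ {Φ Φ' : F}, W.vbH.proj Φ = W.vbH.proj Φ' →
    ∀ {ξ ξ' : E}, D.vbH.proj ξ = D.vbH.proj ξ' →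
    D.vbV.proj ξ = W.vbV.proj Φ → D.vbV.proj ξ' = W.vbV.proj Φ' →
    ev (W.vbH.add Φ Φ') (D.vbH.add ξ ξ') = ev Φ ξ + ev Φ' ξ'
  hat_smul : ∀ (t : 𝕜) {Φ : F} {ξ : E}, D.vbV.proj ξ = W.vbV.proj Φ →
    ev (W.vbH.smul t Φ) (D.vbH.smul t ξ) = t * ev Φ ξ

/-- `U` (with evaluation pairing `ev`) is *the* horizontal dual
`(E^{*H}; K*, E^V; M)` of the double vector bundle `D = (E; E^H, E^V; M)`; this is
the mirror image of `IsVDualDVB`; the fibre of `U` over `x ∈ E^V_m` is the dual of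
the fibre `q̃_H^{-1}(x)`, its projection to `K*` is given by
`⟨q̃_H^{(*)}(Ψ), k⟩ = ⟨Ψ, 0̃^H_x +_V k̄⟩`, and its bundle operations over `K*` (the
`vbV` structure of `U`) are characterized by
`⟨Ψ ∔ Ψ', ξ +_V ξ'⟩ = ⟨Ψ, ξ⟩ + ⟨Ψ', ξ'⟩` and `⟨t ∙ Ψ, t ·_V ξ⟩ = t⟨Ψ, ξ⟩`. -/
structure IsHDualDVB {𝕜 M E : Type*} [Field 𝕜] {EH EV : M → Type*}
    [∀ m, AddCommGroup (EH m)] [∀ m, Module 𝕜 (EH m)]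
    [∀ m, AddCommGroup (EV m)] [∀ m, Module 𝕜 (EV m)]
    (D : DVB 𝕜 E EH EV) {F : Type*}
    (U : DVB 𝕜 F (fun m => Module.Dual 𝕜 (D.CoreT m)) EV)
    (ev : F → E → 𝕜) : Prop where
  ev_addH : ∀ {m : M} {x : EV m} {Ψ : F}, U.vbH.proj Ψ = ⟨m, x⟩ →
    ∀ {ξ ξ' : E}, D.vbH.proj ξ = ⟨m, x⟩ → D.vbH.proj ξ' = ⟨m, x⟩ →
    ev Ψ (D.vbH.add ξ ξ') = ev Ψ ξ + ev Ψ ξ'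
  ev_smulH : ∀ {m : M} {x : EV m} {Ψ : F}, U.vbH.proj Ψ = ⟨m, x⟩ →
    ∀ (t : 𝕜) {ξ : E}, D.vbH.proj ξ = ⟨m, x⟩ →
    ev Ψ (D.vbH.smul t ξ) = t * ev Ψ ξ
  addH_ev : ∀ {Ψ Ψ' : F}, U.vbH.proj Ψ = U.vbH.proj Ψ' →
    ∀ {ξ : E}, D.vbH.proj ξ = U.vbH.proj Ψ →
    ev (U.vbH.add Ψ Ψ') ξ = ev Ψ ξ + ev Ψ' ξ
  smulH_ev : ∀ (t : 𝕜) {Ψ : F} {ξ : E}, D.vbH.proj ξ = U.vbH.proj Ψ →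
    ev (U.vbH.smul t Ψ) ξ = t * ev Ψ ξ
  represent : ∀ (m : M) (x : EV m) (f : Module.Dual 𝕜 (D.vbH.Fib ⟨m, x⟩)),
    ∃! Ψ : U.vbH.Fib ⟨m, x⟩, ∀ ξ : D.vbH.Fib ⟨m, x⟩, ev Ψ.val ξ.val = f ξ
  proj_hat : ∀ {m : M} {x : EV m} {Ψ : F}, U.vbH.proj Ψ = ⟨m, x⟩ →
    ∀ {κ : Module.Dual 𝕜 (D.CoreT m)}, U.vbV.proj Ψ = ⟨m, κ⟩ →
    ∀ k : D.CoreT m, κ k = ev Ψ (D.vbV.add (D.vbH.zero ⟨m, x⟩) k.val.val)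
  hat_add : ∀ {Ψ Ψ' : F}, U.vbV.proj Ψ = U.vbV.proj Ψ' →
    ∀ {ξ ξ' : E}, D.vbV.proj ξ = D.vbV.proj ξ' →
    D.vbH.proj ξ = U.vbH.proj Ψ → D.vbH.proj ξ' = U.vbH.proj Ψ' →
    ev (U.vbV.add Ψ Ψ') (D.vbV.add ξ ξ') = ev Ψ ξ + ev Ψ' ξ'
  hat_smul : ∀ (t : 𝕜) {Ψ : F} {ξ : E}, D.vbH.proj ξ = U.vbH.proj Ψ →
    ev (U.vbV.smul t Ψ) (D.vbV.smul t ξ) = t * ev Ψ ξ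

private theorem sig_eq' {α : Type*} {F : α → Type*} {a : α} {x y : F a}
    (h : (⟨a, x⟩ : Σ a, F a) = ⟨a, y⟩) : x = y := by
  simpa using h

namespace VBOn

variable {𝕜 E B : Type*} [Field 𝕜]

theorem add_zero_of (v : VBOn 𝕜 E B) {e : E} {b : B} (h : v.proj e = b) :
    v.add e (v.zero b) = e := by
  subst h
  rw [v.add_comm (v.proj_zero (v.proj e)).symm]
  exact v.zero_add e

theorem zero_add_of (v : VBOn 𝕜 E B) {e : E} {b : B} (h : v.proj e = b) :
    v.add (v.zero b) e = e := by
  subst h; exact v.zero_add e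

theorem dual_congr (v : VBOn 𝕜 E B) {b : B} (f : Module.Dual 𝕜 (v.Fib b)) {a a' : E}
    (h : a = a') (p1 : v.proj a = b) (p2 : v.proj a' = b) :
    f ⟨a, p1⟩ = f ⟨a', p2⟩ := by subst h; rfl

theorem cancel₁ (v : VBOn 𝕜 E B) {b : B} (z a : v.Fib b) :
    v.add z.val (v.add a.val (v.smul (-1) z.val)) = a.val := by
  have h : z + (a + -z) = a := by abel
  calc v.add z.val (v.add a.val (v.smul (-1) z.val)) = (z + (a + -z)).val := rfl
    _ = a.val := by rw [h]

theorem cancel₂ (v : VBOn 𝕜 E B) {b : B} (z a : v.Fib b) :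
    v.add (v.add z.val a.val) (v.smul (-1) z.val) = a.val := by
  have h : (z + a) + -z = a := by abel
  calc v.add (v.add z.val a.val) (v.smul (-1) z.val) = ((z + a) + -z).val := rfl
    _ = a.val := by rw [h]

end VBOn

namespace DVB

variable {𝕜 M E : Type*} [Field 𝕜] {EH EV : M → Type*}
  [∀ m, AddCommGroup (EH m)] [∀ m, Module 𝕜 (EH m)]
  [∀ m, AddCommGroup (EV m)] [∀ m, Module 𝕜 (EV m)]
  (D : DVB 𝕜 E EH EV)

theorem evCoreV_def {m : M} {X : EH m} (Φ : Module.Dual 𝕜 (D.vbV.Fib ⟨m, X⟩))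
    (k : D.CoreT m) :
    D.evCoreV Φ k
      = Φ ⟨D.vbH.add (D.vbV.zero ⟨m, X⟩) k.val.val, D.zeroV_addH_core_mem X k⟩ := rfl

theorem evCoreH_def {m : M} {x : EV m} (Ψ : Module.Dual 𝕜 (D.vbH.Fib ⟨m, x⟩))
    (k : D.CoreT m) :
    D.evCoreH Ψ k
      = Ψ ⟨D.vbV.add (D.vbH.zero ⟨m, x⟩) k.val.val, D.zeroH_addV_core_mem x k⟩ := rfl

theorem exists_fibH {m : M} {X : EH m} (e : E) (h : D.vbV.proj e = ⟨m, X⟩) :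
    ∃ z : EV m, D.vbH.proj e = ⟨m, z⟩ := D.compat e m X h

theorem exists_fibV {m : M} {x : EV m} (e : E) (h : D.vbH.proj e = ⟨m, x⟩) :
    ∃ Z : EH m, D.vbV.proj e = ⟨m, Z⟩ := by
  rcases h' : D.vbV.proj e with ⟨m₀, Z₀⟩
  obtain ⟨x₀, hx₀⟩ := D.compat e m₀ Z₀ h'
  have hm : m₀ = m := congrArg Sigma.fst (hx₀.symm.trans h)
  subst hm
  exact ⟨Z₀, rfl⟩

/-- The linear map sending an element of the fibre of `E → E^V` over `x` to its
horizontal projection in `E^H_m`. -/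
noncomputable def Ycomp {m : M} (x : EV m) :
    D.vbH.Fib (⟨m, x⟩ : Σ m, EV m) →ₗ[𝕜] EH m where
  toFun η := (D.exists_fibV η.val η.prop).choose
  map_add' η ζ := by
    have h1 := (D.exists_fibV η.val η.prop).choose_spec
    have h2 := (D.exists_fibV ζ.val ζ.prop).choose_spec
    have h3 := (D.exists_fibV (η + ζ).val (η + ζ).prop).choose_spec
    have h4 := D.projV_addH (η.prop.trans ζ.prop.symm) h1 h2
    exact sig_eq' (h3.symm.trans h4)
  map_smul' t η := by
    have h1 := (D.exists_fibV η.val η.prop).choose_spec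
    have h3 := (D.exists_fibV (t • η).val (t • η).prop).choose_spec
    have h4 := D.projV_smulH t h1
    exact sig_eq' (h3.symm.trans h4)

/-- The linear map sending an element of the fibre of `E → E^H` over `X` to its
vertical projection in `E^V_m`. -/
noncomputable def YcompV {m : M} (X : EH m) :
    D.vbV.Fib (⟨m, X⟩ : Σ m, EH m) →ₗ[𝕜] EV m where
  toFun η := (D.exists_fibH η.val η.prop).choose
  map_add' η ζ := by
    have h1 := (D.exists_fibH η.val η.prop).choose_spec
    have h2 := (D.exists_fibH ζ.val ζ.prop).choose_spec
    have h3 := (D.exists_fibH (η + ζ).val (η + ζ).prop).choose_spec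
    have h4 := D.projH_addV (η.prop.trans ζ.prop.symm) h1 h2
    exact sig_eq' (h3.symm.trans h4)
  map_smul' t η := by
    have h1 := (D.exists_fibH η.val η.prop).choose_spec
    have h3 := (D.exists_fibH (t • η).val (t • η).prop).choose_spec
    have h4 := D.projH_smulV t h1
    exact sig_eq' (h3.symm.trans h4)

/-- The translation identity `ξ +_H (0̃^H_x +_V k̄) = ξ +_V (0̃^V_X +_H k̄)`. -/
theorem shift_eq {m : M} {X : EH m} {x : EV m} {ξ e : E}
    (hVξ : D.vbV.proj ξ = ⟨m, X⟩) (hHξ : D.vbH.proj ξ = ⟨m, x⟩)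
    (hVe : D.vbV.proj e = ⟨m, (0 : EH m)⟩) (hHe : D.vbH.proj e = ⟨m, (0 : EV m)⟩) :
    D.vbH.add ξ (D.vbV.add (D.vbH.zero ⟨m, x⟩) e)
      = D.vbV.add ξ (D.vbH.add (D.vbV.zero ⟨m, X⟩) e) := by
  have c1 : D.vbV.proj ξ = D.vbV.proj (D.vbV.zero ⟨m, X⟩) := by
    rw [hVξ, D.vbV.proj_zero]
  have c2 : D.vbV.proj (D.vbH.zero ⟨m, x⟩) = D.vbV.proj e := by
    rw [D.projV_zeroH, hVe]
  have c3 : D.vbH.proj ξ = D.vbH.proj (D.vbH.zero ⟨m, x⟩) := by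
    rw [hHξ, D.vbH.proj_zero]
  have c4 : D.vbH.proj (D.vbV.zero ⟨m, X⟩) = D.vbH.proj e := by
    rw [D.projH_zeroV, hHe]
  calc D.vbH.add ξ (D.vbV.add (D.vbH.zero ⟨m, x⟩) e)
      = D.vbH.add (D.vbV.add ξ (D.vbV.zero ⟨m, X⟩)) (D.vbV.add (D.vbH.zero ⟨m, x⟩) e) := by
        rw [D.vbV.add_zero_of hVξ]
    _ = D.vbV.add (D.vbH.add ξ (D.vbH.zero ⟨m, x⟩)) (D.vbH.add (D.vbV.zero ⟨m, X⟩) e) :=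
        D.interchange c1 c2 c3 c4
    _ = D.vbV.add ξ (D.vbH.add (D.vbV.zero ⟨m, X⟩) e) := by
        rw [D.vbH.add_zero_of hHξ]

/-- Two elements of the same form `(X, x)` differ by a core translate. -/
theorem exists_core_diff {m : M} {X : EH m} {x : EV m} {ξ ξ' : E}
    (hVξ : D.vbV.proj ξ = ⟨m, X⟩) (hHξ : D.vbH.proj ξ = ⟨m, x⟩)
    (hVξ' : D.vbV.proj ξ' = ⟨m, X⟩) (hHξ' : D.vbH.proj ξ' = ⟨m, x⟩) :
    ∃ e : E, D.vbV.proj e = ⟨m, (0 : EH m)⟩ ∧ D.vbH.proj e = ⟨m, (0 : EV m)⟩ ∧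
      ξ' = D.vbH.add ξ (D.vbV.add (D.vbH.zero ⟨m, x⟩) e) := by
  let a : D.vbH.Fib (⟨m, x⟩ : Σ m, EV m) := ⟨ξ, hHξ⟩
  let a' : D.vbH.Fib (⟨m, x⟩ : Σ m, EV m) := ⟨ξ', hHξ'⟩
  have hδval : (a' - a).val = D.vbH.add ξ' (D.vbH.smul (-1) ξ) := by
    rw [sub_eq_add_neg]; rfl
  have hVδ : D.vbV.proj (a' - a).val = ⟨m, (0 : EH m)⟩ := by
    rw [hδval]
    have h := D.projV_addH (by rw [D.vbH.proj_smul, hHξ', hHξ]) hVξ' (D.projV_smulH (-1) hVξ)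
    rw [h]
    simp
  let z : D.vbV.Fib (⟨m, (0 : EH m)⟩ : Σ m, EH m) := ⟨D.vbH.zero ⟨m, x⟩, D.projV_zeroH m x⟩
  let d : D.vbV.Fib (⟨m, (0 : EH m)⟩ : Σ m, EH m) := ⟨(a' - a).val, hVδ⟩
  have heval : (d - z).val
      = D.vbV.add (a' - a).val (D.vbV.smul (-1) (D.vbH.zero ⟨m, x⟩)) := by
    rw [sub_eq_add_neg]; rfl
  have hHe : D.vbH.proj (d - z).val = ⟨m, (0 : EV m)⟩ := by
    rw [heval]
    have hsm : D.vbH.proj (D.vbV.smul (-1) (D.vbH.zero ⟨m, x⟩)) = ⟨m, (-1 : 𝕜) • x⟩ :=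
      D.projH_smulV (-1) (D.vbH.proj_zero _)
    have h := D.projH_addV (by rw [hVδ, D.vbV.proj_smul, D.projV_zeroH]) (a' - a).prop hsm
    rw [h]
    simp
  refine ⟨(d - z).val, (d - z).prop, hHe, ?_⟩
  have h1 : D.vbV.add (D.vbH.zero ⟨m, x⟩) (d - z).val = (a' - a).val := by
    have h : z + (d - z) = d := by abel
    calc D.vbV.add (D.vbH.zero ⟨m, x⟩) (d - z).val = (z + (d - z)).val := rfl
      _ = (a' - a).val := by rw [h]
  have h2 : D.vbH.add ξ (a' - a).val = ξ' := by
    have h : a + (a' - a) = a' := by abel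
    calc D.vbH.add ξ (a' - a).val = (a + (a' - a)).val := rfl
      _ = ξ' := by rw [h]
  rw [h1, h2]

/-- Independence of the pairing from the representative. -/
theorem pairing_indep {m : M} {X : EH m} {x : EV m}
    (Φ : Module.Dual 𝕜 (D.vbV.Fib ⟨m, X⟩)) (Ψ : Module.Dual 𝕜 (D.vbH.Fib ⟨m, x⟩))
    (hκ : ∀ k : D.CoreT m, D.evCoreV Φ k = D.evCoreH Ψ k)
    {ξ ξ' : E} (hVξ : D.vbV.proj ξ = ⟨m, X⟩) (hHξ : D.vbH.proj ξ = ⟨m, x⟩)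
    (hVξ' : D.vbV.proj ξ' = ⟨m, X⟩) (hHξ' : D.vbH.proj ξ' = ⟨m, x⟩) :
    Ψ ⟨ξ', hHξ'⟩ - Φ ⟨ξ', hVξ'⟩ = Ψ ⟨ξ, hHξ⟩ - Φ ⟨ξ, hVξ⟩ := by
  obtain ⟨e, hVe, hHe, hdec⟩ := D.exists_core_diff hVξ hHξ hVξ' hHξ'
  let kfib : D.vbV.Fib (⟨m, (0 : EH m)⟩ : Σ m, EH m) := ⟨e, hVe⟩
  let k : D.CoreT m := ⟨kfib, hHe⟩
  have hΨ : Ψ ⟨ξ', hHξ'⟩ = Ψ ⟨ξ, hHξ⟩ + D.evCoreH Ψ k := by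
    let u : D.vbH.Fib (⟨m, x⟩ : Σ m, EV m) := ⟨ξ, hHξ⟩
    let w : D.vbH.Fib (⟨m, x⟩ : Σ m, EV m) :=
      ⟨D.vbV.add (D.vbH.zero ⟨m, x⟩) e, D.zeroH_addV_core_mem x k⟩
    have hsplit : (⟨ξ', hHξ'⟩ : D.vbH.Fib ⟨m, x⟩) = u + w := by
      apply Subtype.ext
      simpa using hdec
    rw [hsplit, map_add]
    rfl
  have hΦ : Φ ⟨ξ', hVξ'⟩ = Φ ⟨ξ, hVξ⟩ + D.evCoreV Φ k := by
    have hstep : ξ' = D.vbV.add ξ (D.vbH.add (D.vbV.zero ⟨m, X⟩) e) := by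
      rw [hdec]; exact D.shift_eq hVξ hHξ hVe hHe
    let u : D.vbV.Fib (⟨m, X⟩ : Σ m, EH m) := ⟨ξ, hVξ⟩
    let w : D.vbV.Fib (⟨m, X⟩ : Σ m, EH m) :=
      ⟨D.vbH.add (D.vbV.zero ⟨m, X⟩) e, D.zeroV_addH_core_mem X k⟩
    have hsplit : (⟨ξ', hVξ'⟩ : D.vbV.Fib ⟨m, X⟩) = u + w := by
      apply Subtype.ext
      simpa using hstep
    rw [hsplit, map_add]
    rfl
  rw [hΨ, hΦ, hκ k]
  ring

theorem evShiftH_add {m : M} {x : EV m} (Ψ : Module.Dual 𝕜 (D.vbH.Fib (⟨m, x⟩ : Σ m, EV m)))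
    {e e' : E} (hVe : D.vbV.proj e = ⟨m, (0 : EH m)⟩) (hHe : D.vbH.proj e = ⟨m, (0 : EV m)⟩)
    (hVe' : D.vbV.proj e' = ⟨m, (0 : EH m)⟩) (hHe' : D.vbH.proj e' = ⟨m, (0 : EV m)⟩)
    (h1 : D.vbH.proj (D.vbV.add (D.vbH.zero ⟨m, x⟩) (D.vbH.add e e')) = ⟨m, x⟩)
    (h2 : D.vbH.proj (D.vbV.add (D.vbH.zero ⟨m, x⟩) e) = ⟨m, x⟩)
    (h3 : D.vbH.proj (D.vbV.add (D.vbH.zero ⟨m, x⟩) e') = ⟨m, x⟩) :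
    Ψ ⟨D.vbV.add (D.vbH.zero ⟨m, x⟩) (D.vbH.add e e'), h1⟩
      = Ψ ⟨D.vbV.add (D.vbH.zero ⟨m, x⟩) e, h2⟩ + Ψ ⟨D.vbV.add (D.vbH.zero ⟨m, x⟩) e', h3⟩ := by
  have hint := D.interchange (e₁ := D.vbH.zero ⟨m, x⟩) (e₂ := e) (e₃ := D.vbH.zero ⟨m, x⟩)
    (e₄ := e') (by rw [D.projV_zeroH, hVe]) (by rw [D.projV_zeroH, hVe']) rfl
    (hHe.trans hHe'.symm)
  rw [D.vbH.zero_add_of (D.vbH.proj_zero (⟨m, x⟩ : Σ m, EV m))] at hint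
  let u : D.vbH.Fib (⟨m, x⟩ : Σ m, EV m) := ⟨D.vbV.add (D.vbH.zero ⟨m, x⟩) e, h2⟩
  let w : D.vbH.Fib (⟨m, x⟩ : Σ m, EV m) := ⟨D.vbV.add (D.vbH.zero ⟨m, x⟩) e', h3⟩
  have hsplit : (⟨D.vbV.add (D.vbH.zero ⟨m, x⟩) (D.vbH.add e e'), h1⟩ : D.vbH.Fib ⟨m, x⟩)
      = u + w := Subtype.ext hint.symm
  rw [hsplit, map_add]

theorem evShiftH_smul {m : M} {x : EV m} (Ψ : Module.Dual 𝕜 (D.vbH.Fib (⟨m, x⟩ : Σ m, EV m)))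
    (t : 𝕜) {e : E} (hVe : D.vbV.proj e = ⟨m, (0 : EH m)⟩)
    (h1 : D.vbH.proj (D.vbV.add (D.vbH.zero ⟨m, x⟩) (D.vbH.smul t e)) = ⟨m, x⟩)
    (h2 : D.vbH.proj (D.vbV.add (D.vbH.zero ⟨m, x⟩) e) = ⟨m, x⟩) :
    Ψ ⟨D.vbV.add (D.vbH.zero ⟨m, x⟩) (D.vbH.smul t e), h1⟩
      = t * Ψ ⟨D.vbV.add (D.vbH.zero ⟨m, x⟩) e, h2⟩ := by
  have hint := D.smulH_addV t (e := D.vbH.zero ⟨m, x⟩) (e' := e) (by rw [D.projV_zeroH, hVe])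
  rw [D.vbH.smul_zero' t (⟨m, x⟩ : Σ m, EV m)] at hint
  let u : D.vbH.Fib (⟨m, x⟩ : Σ m, EV m) := ⟨D.vbV.add (D.vbH.zero ⟨m, x⟩) e, h2⟩
  have hsplit : (⟨D.vbV.add (D.vbH.zero ⟨m, x⟩) (D.vbH.smul t e), h1⟩ : D.vbH.Fib ⟨m, x⟩)
      = t • u := Subtype.ext hint.symm
  rw [hsplit, map_smul, smul_eq_mul]

theorem evShiftV_add {m : M} {X : EH m} (Φ : Module.Dual 𝕜 (D.vbV.Fib (⟨m, X⟩ : Σ m, EH m)))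
    {e e' : E} (hVe : D.vbV.proj e = ⟨m, (0 : EH m)⟩) (hHe : D.vbH.proj e = ⟨m, (0 : EV m)⟩)
    (hVe' : D.vbV.proj e' = ⟨m, (0 : EH m)⟩) (hHe' : D.vbH.proj e' = ⟨m, (0 : EV m)⟩)
    (h1 : D.vbV.proj (D.vbH.add (D.vbV.zero ⟨m, X⟩) (D.vbV.add e e')) = ⟨m, X⟩)
    (h2 : D.vbV.proj (D.vbH.add (D.vbV.zero ⟨m, X⟩) e) = ⟨m, X⟩)
    (h3 : D.vbV.proj (D.vbH.add (D.vbV.zero ⟨m, X⟩) e') = ⟨m, X⟩) :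
    Φ ⟨D.vbH.add (D.vbV.zero ⟨m, X⟩) (D.vbV.add e e'), h1⟩
      = Φ ⟨D.vbH.add (D.vbV.zero ⟨m, X⟩) e, h2⟩ + Φ ⟨D.vbH.add (D.vbV.zero ⟨m, X⟩) e', h3⟩ := by
  have hint := D.interchange (e₁ := D.vbV.zero ⟨m, X⟩) (e₂ := D.vbV.zero ⟨m, X⟩) (e₃ := e)
    (e₄ := e') rfl (hVe.trans hVe'.symm) (by rw [D.projH_zeroV, hHe])
    (by rw [D.projH_zeroV, hHe'])
  rw [D.vbV.zero_add_of (D.vbV.proj_zero (⟨m, X⟩ : Σ m, EH m))] at hint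
  let u : D.vbV.Fib (⟨m, X⟩ : Σ m, EH m) := ⟨D.vbH.add (D.vbV.zero ⟨m, X⟩) e, h2⟩
  let w : D.vbV.Fib (⟨m, X⟩ : Σ m, EH m) := ⟨D.vbH.add (D.vbV.zero ⟨m, X⟩) e', h3⟩
  have hsplit : (⟨D.vbH.add (D.vbV.zero ⟨m, X⟩) (D.vbV.add e e'), h1⟩ : D.vbV.Fib ⟨m, X⟩)
      = u + w := Subtype.ext hint
  rw [hsplit, map_add]

theorem evShiftV_smul {m : M} {X : EH m} (Φ : Module.Dual 𝕜 (D.vbV.Fib (⟨m, X⟩ : Σ m, EH m)))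
    (t : 𝕜) {e : E} (hHe : D.vbH.proj e = ⟨m, (0 : EV m)⟩)
    (h1 : D.vbV.proj (D.vbH.add (D.vbV.zero ⟨m, X⟩) (D.vbV.smul t e)) = ⟨m, X⟩)
    (h2 : D.vbV.proj (D.vbH.add (D.vbV.zero ⟨m, X⟩) e) = ⟨m, X⟩) :
    Φ ⟨D.vbH.add (D.vbV.zero ⟨m, X⟩) (D.vbV.smul t e), h1⟩
      = t * Φ ⟨D.vbH.add (D.vbV.zero ⟨m, X⟩) e, h2⟩ := by
  have hint := D.smulV_addH t (e := D.vbV.zero ⟨m, X⟩) (e' := e) (by rw [D.projH_zeroV, hHe])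
  rw [D.vbV.smul_zero' t (⟨m, X⟩ : Σ m, EH m)] at hint
  let u : D.vbV.Fib (⟨m, X⟩ : Σ m, EH m) := ⟨D.vbH.add (D.vbV.zero ⟨m, X⟩) e, h2⟩
  have hsplit : (⟨D.vbH.add (D.vbV.zero ⟨m, X⟩) (D.vbV.smul t e), h1⟩ : D.vbV.Fib ⟨m, X⟩)
      = t • u := Subtype.ext hint.symm
  rw [hsplit, map_smul, smul_eq_mul]

/-- The core part of an element of form `(0, x')`:  `ξ -_V 0̃^H_{x'}`. -/
def corePartV {m : M} (x' : EV m) (w : E) : E :=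
  D.vbV.add w (D.vbV.smul (-1) (D.vbH.zero ⟨m, x'⟩))

theorem corePartV_projV {m : M} {x' : EV m} {w : E}
    (hVw : D.vbV.proj w = ⟨m, (0 : EH m)⟩) :
    D.vbV.proj (D.corePartV x' w) = ⟨m, (0 : EH m)⟩ :=
  (D.vbV.proj_add (by rw [hVw, D.vbV.proj_smul, D.projV_zeroH])).trans hVw

theorem corePartV_projH {m : M} {x' : EV m} {w : E}
    (hVw : D.vbV.proj w = ⟨m, (0 : EH m)⟩) (hHw : D.vbH.proj w = ⟨m, x'⟩) :
    D.vbH.proj (D.corePartV x' w) = ⟨m, (0 : EV m)⟩ := by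
  show D.vbH.proj (D.vbV.add w (D.vbV.smul (-1) (D.vbH.zero ⟨m, x'⟩))) = ⟨m, (0 : EV m)⟩
  have h := D.projH_addV (by rw [hVw, D.vbV.proj_smul, D.projV_zeroH]) hHw
    (D.projH_smulV (-1) (D.vbH.proj_zero (⟨m, x'⟩ : Σ m, EV m)))
  rw [h]
  simp

theorem corePartV_recover {m : M} {x' : EV m} {w : E}
    (hVw : D.vbV.proj w = ⟨m, (0 : EH m)⟩) :
    D.vbV.add (D.vbH.zero ⟨m, x'⟩) (D.corePartV x' w) = w :=
  D.vbV.cancel₁ ⟨D.vbH.zero ⟨m, x'⟩, D.projV_zeroH m x'⟩ ⟨w, hVw⟩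

theorem corePartV_add {m : M} {x' : EV m} {w w' : E}
    (hVw : D.vbV.proj w = ⟨m, (0 : EH m)⟩) (hHw : D.vbH.proj w = ⟨m, x'⟩)
    (hVw' : D.vbV.proj w' = ⟨m, (0 : EH m)⟩) (hHw' : D.vbH.proj w' = ⟨m, x'⟩) :
    D.corePartV x' (D.vbH.add w w')
      = D.vbH.add (D.corePartV x' w) (D.corePartV x' w') := by
  have hu : D.vbV.proj (D.vbH.add (D.corePartV x' w) (D.corePartV x' w'))
      = ⟨m, (0 : EH m)⟩ := by
    have h := D.projV_addH
      ((D.corePartV_projH hVw hHw).trans (D.corePartV_projH hVw' hHw').symm)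
      (D.corePartV_projV hVw) (D.corePartV_projV hVw')
    rw [h]
    simp
  have hw2 : D.vbH.add w w'
      = D.vbV.add (D.vbH.zero ⟨m, x'⟩)
          (D.vbH.add (D.corePartV x' w) (D.corePartV x' w')) := by
    calc D.vbH.add w w'
        = D.vbH.add (D.vbV.add (D.vbH.zero ⟨m, x'⟩) (D.corePartV x' w))
            (D.vbV.add (D.vbH.zero ⟨m, x'⟩) (D.corePartV x' w')) := by
          rw [D.corePartV_recover hVw, D.corePartV_recover hVw']
      _ = D.vbV.add (D.vbH.add (D.vbH.zero ⟨m, x'⟩) (D.vbH.zero ⟨m, x'⟩))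
            (D.vbH.add (D.corePartV x' w) (D.corePartV x' w')) :=
          D.interchange (by rw [D.projV_zeroH, D.corePartV_projV hVw])
            (by rw [D.projV_zeroH, D.corePartV_projV hVw']) rfl
            ((D.corePartV_projH hVw hHw).trans (D.corePartV_projH hVw' hHw').symm)
      _ = D.vbV.add (D.vbH.zero ⟨m, x'⟩)
            (D.vbH.add (D.corePartV x' w) (D.corePartV x' w')) := by
          rw [D.vbH.zero_add_of (D.vbH.proj_zero (⟨m, x'⟩ : Σ m, EV m))]
  have step1 : D.corePartV x' (D.vbH.add w w')
      = D.vbV.add (D.vbV.add (D.vbH.zero ⟨m, x'⟩)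
          (D.vbH.add (D.corePartV x' w) (D.corePartV x' w')))
          (D.vbV.smul (-1) (D.vbH.zero ⟨m, x'⟩)) := by
    show D.vbV.add (D.vbH.add w w') (D.vbV.smul (-1) (D.vbH.zero ⟨m, x'⟩)) = _
    rw [hw2]
  exact step1.trans (D.vbV.cancel₂ ⟨D.vbH.zero ⟨m, x'⟩, D.projV_zeroH m x'⟩
    ⟨D.vbH.add (D.corePartV x' w) (D.corePartV x' w'), hu⟩)

theorem corePartV_smul {m : M} (t : 𝕜) {x' : EV m} {w : E}
    (hVw : D.vbV.proj w = ⟨m, (0 : EH m)⟩) :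
    D.corePartV x' (D.vbH.smul t w) = D.vbH.smul t (D.corePartV x' w) := by
  have hu : D.vbV.proj (D.vbH.smul t (D.corePartV x' w)) = ⟨m, (0 : EH m)⟩ := by
    have h := D.projV_smulH t (D.corePartV_projV (x' := x') hVw)
    rw [h]
    simp
  have hw2 : D.vbH.smul t w
      = D.vbV.add (D.vbH.zero ⟨m, x'⟩) (D.vbH.smul t (D.corePartV x' w)) := by
    conv_lhs => rw [← D.corePartV_recover (x' := x') hVw]
    rw [D.smulH_addV t (by rw [D.projV_zeroH, D.corePartV_projV hVw]),
      D.vbH.smul_zero' t (⟨m, x'⟩ : Σ m, EV m)]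
  have step1 : D.corePartV x' (D.vbH.smul t w)
      = D.vbV.add (D.vbV.add (D.vbH.zero ⟨m, x'⟩) (D.vbH.smul t (D.corePartV x' w)))
          (D.vbV.smul (-1) (D.vbH.zero ⟨m, x'⟩)) := by
    show D.vbV.add (D.vbH.smul t w) (D.vbV.smul (-1) (D.vbH.zero ⟨m, x'⟩)) = _
    rw [hw2]
  exact step1.trans (D.vbV.cancel₂ ⟨D.vbH.zero ⟨m, x'⟩, D.projV_zeroH m x'⟩
    ⟨D.vbH.smul t (D.corePartV x' w), hu⟩)

/-- The core part of an element of form `(X', 0)`:  `ξ -_H 0̃^V_{X'}`. -/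
def corePartH {m : M} (X' : EH m) (w : E) : E :=
  D.vbH.add w (D.vbH.smul (-1) (D.vbV.zero ⟨m, X'⟩))

theorem corePartH_projH {m : M} {X' : EH m} {w : E}
    (hHw : D.vbH.proj w = ⟨m, (0 : EV m)⟩) :
    D.vbH.proj (D.corePartH X' w) = ⟨m, (0 : EV m)⟩ :=
  (D.vbH.proj_add (by rw [hHw, D.vbH.proj_smul, D.projH_zeroV])).trans hHw

theorem corePartH_projV {m : M} {X' : EH m} {w : E}
    (hHw : D.vbH.proj w = ⟨m, (0 : EV m)⟩) (hVw : D.vbV.proj w = ⟨m, X'⟩) :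
    D.vbV.proj (D.corePartH X' w) = ⟨m, (0 : EH m)⟩ := by
  show D.vbV.proj (D.vbH.add w (D.vbH.smul (-1) (D.vbV.zero ⟨m, X'⟩))) = ⟨m, (0 : EH m)⟩
  have h := D.projV_addH (by rw [hHw, D.vbH.proj_smul, D.projH_zeroV]) hVw
    (D.projV_smulH (-1) (D.vbV.proj_zero (⟨m, X'⟩ : Σ m, EH m)))
  rw [h]
  simp

theorem corePartH_recover {m : M} {X' : EH m} {w : E}
    (hHw : D.vbH.proj w = ⟨m, (0 : EV m)⟩) :
    D.vbH.add (D.vbV.zero ⟨m, X'⟩) (D.corePartH X' w) = w :=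
  D.vbH.cancel₁ ⟨D.vbV.zero ⟨m, X'⟩, D.projH_zeroV m X'⟩ ⟨w, hHw⟩

theorem corePartH_add {m : M} {X' : EH m} {w w' : E}
    (hHw : D.vbH.proj w = ⟨m, (0 : EV m)⟩) (hVw : D.vbV.proj w = ⟨m, X'⟩)
    (hHw' : D.vbH.proj w' = ⟨m, (0 : EV m)⟩) (hVw' : D.vbV.proj w' = ⟨m, X'⟩) :
    D.corePartH X' (D.vbV.add w w')
      = D.vbV.add (D.corePartH X' w) (D.corePartH X' w') := by
  have hu : D.vbH.proj (D.vbV.add (D.corePartH X' w) (D.corePartH X' w'))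
      = ⟨m, (0 : EV m)⟩ := by
    have h := D.projH_addV
      ((D.corePartH_projV hHw hVw).trans (D.corePartH_projV hHw' hVw').symm)
      (D.corePartH_projH hHw) (D.corePartH_projH hHw')
    rw [h]
    simp
  have hw2 : D.vbV.add w w'
      = D.vbH.add (D.vbV.zero ⟨m, X'⟩)
          (D.vbV.add (D.corePartH X' w) (D.corePartH X' w')) := by
    calc D.vbV.add w w'
        = D.vbV.add (D.vbH.add (D.vbV.zero ⟨m, X'⟩) (D.corePartH X' w))
            (D.vbH.add (D.vbV.zero ⟨m, X'⟩) (D.corePartH X' w')) := by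
          rw [D.corePartH_recover hHw, D.corePartH_recover hHw']
      _ = D.vbH.add (D.vbV.add (D.vbV.zero ⟨m, X'⟩) (D.vbV.zero ⟨m, X'⟩))
            (D.vbV.add (D.corePartH X' w) (D.corePartH X' w')) :=
          (D.interchange rfl
            ((D.corePartH_projV hHw hVw).trans (D.corePartH_projV hHw' hVw').symm)
            (by rw [D.projH_zeroV, D.corePartH_projH hHw])
            (by rw [D.projH_zeroV, D.corePartH_projH hHw'])).symm
      _ = D.vbH.add (D.vbV.zero ⟨m, X'⟩)
            (D.vbV.add (D.corePartH X' w) (D.corePartH X' w')) := by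
          rw [D.vbV.zero_add_of (D.vbV.proj_zero (⟨m, X'⟩ : Σ m, EH m))]
  have step1 : D.corePartH X' (D.vbV.add w w')
      = D.vbH.add (D.vbH.add (D.vbV.zero ⟨m, X'⟩)
          (D.vbV.add (D.corePartH X' w) (D.corePartH X' w')))
          (D.vbH.smul (-1) (D.vbV.zero ⟨m, X'⟩)) := by
    show D.vbH.add (D.vbV.add w w') (D.vbH.smul (-1) (D.vbV.zero ⟨m, X'⟩)) = _
    rw [hw2]
  exact step1.trans (D.vbH.cancel₂ ⟨D.vbV.zero ⟨m, X'⟩, D.projH_zeroV m X'⟩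
    ⟨D.vbV.add (D.corePartH X' w) (D.corePartH X' w'), hu⟩)

theorem corePartH_smul {m : M} (t : 𝕜) {X' : EH m} {w : E}
    (hHw : D.vbH.proj w = ⟨m, (0 : EV m)⟩) :
    D.corePartH X' (D.vbV.smul t w) = D.vbV.smul t (D.corePartH X' w) := by
  have hu : D.vbH.proj (D.vbV.smul t (D.corePartH X' w)) = ⟨m, (0 : EV m)⟩ := by
    have h := D.projH_smulV t (D.corePartH_projH (X' := X') hHw)
    rw [h]
    simp
  have hw2 : D.vbV.smul t w
      = D.vbH.add (D.vbV.zero ⟨m, X'⟩) (D.vbV.smul t (D.corePartH X' w)) := by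
    conv_lhs => rw [← D.corePartH_recover (X' := X') hHw]
    rw [D.smulV_addH t (by rw [D.projH_zeroV, D.corePartH_projH hHw]),
      D.vbV.smul_zero' t (⟨m, X'⟩ : Σ m, EH m)]
  have step1 : D.corePartH X' (D.vbV.smul t w)
      = D.vbH.add (D.vbH.add (D.vbV.zero ⟨m, X'⟩) (D.vbV.smul t (D.corePartH X' w)))
          (D.vbH.smul (-1) (D.vbV.zero ⟨m, X'⟩)) := by
    show D.vbH.add (D.vbV.smul t w) (D.vbH.smul (-1) (D.vbV.zero ⟨m, X'⟩)) = _
    rw [hw2]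
  exact step1.trans (D.vbH.cancel₂ ⟨D.vbV.zero ⟨m, X'⟩, D.projH_zeroV m X'⟩
    ⟨D.vbV.smul t (D.corePartH X' w), hu⟩)

/-- Every functional over a fibre `x` of `E^{*H} → K*` can be transported to a functional
over any other fibre `x'` inducing the same core functional. -/
theorem exists_dual_transport {m : M} {x x' : EV m}
    (Ψ : Module.Dual 𝕜 (D.vbH.Fib (⟨m, x⟩ : Σ m, EV m))) :
    ∃ Ψ' : Module.Dual 𝕜 (D.vbH.Fib (⟨m, x'⟩ : Σ m, EV m)),
      ∀ (e : E) (hVe : D.vbV.proj e = ⟨m, (0 : EH m)⟩)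
        (_hHe : D.vbH.proj e = ⟨m, (0 : EV m)⟩)
        (h1 : D.vbH.proj (D.vbV.add (D.vbH.zero ⟨m, x'⟩) e) = ⟨m, x'⟩)
        (h2 : D.vbH.proj (D.vbV.add (D.vbH.zero ⟨m, x⟩) e) = ⟨m, x⟩),
        Ψ' ⟨D.vbV.add (D.vbH.zero ⟨m, x'⟩) e, h1⟩
          = Ψ ⟨D.vbV.add (D.vbH.zero ⟨m, x⟩) e, h2⟩ := by
  classical
  let Psihat : E → 𝕜 := fun ξ => if h : D.vbH.proj ξ = ⟨m, x⟩ then Ψ ⟨ξ, h⟩ else 0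
  have hPsihat : ∀ (ξ : E) (h : D.vbH.proj ξ = ⟨m, x⟩), Psihat ξ = Ψ ⟨ξ, h⟩ :=
    fun ξ h => dif_pos h
  have pf : ∀ w : E, D.vbV.proj w = ⟨m, (0 : EH m)⟩ → D.vbH.proj w = ⟨m, (0 : EV m)⟩ →
      D.vbH.proj (D.vbV.add (D.vbH.zero ⟨m, x⟩) w) = ⟨m, x⟩ := by
    intro w hVw hHw
    have h := D.projH_addV (by rw [D.projV_zeroH, hVw])
      (D.vbH.proj_zero (⟨m, x⟩ : Σ m, EV m)) hHw
    rw [h]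
    simp
  let T : Submodule 𝕜 (D.vbH.Fib (⟨m, x'⟩ : Σ m, EV m)) :=
    { carrier := {η | D.vbV.proj η.val = ⟨m, (0 : EH m)⟩}
      add_mem' := by
        intro a b ha hb
        show D.vbV.proj (D.vbH.add a.val b.val) = ⟨m, (0 : EH m)⟩
        have h := D.projV_addH (a.prop.trans b.prop.symm) ha hb
        rw [h]
        simp
      zero_mem' := by
        show D.vbV.proj (D.vbH.zero ⟨m, x'⟩) = ⟨m, (0 : EH m)⟩
        exact D.projV_zeroH m x'
      smul_mem' := by
        intro t a ha
        show D.vbV.proj (D.vbH.smul t a.val) = ⟨m, (0 : EH m)⟩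
        have h := D.projV_smulH t ha
        rw [h]
        simp }
  have memT : ∀ η : T, D.vbV.proj (η.val.val) = ⟨m, (0 : EH m)⟩ := fun η => η.prop
  let lam : T →ₗ[𝕜] 𝕜 :=
    { toFun := fun η => Psihat (D.vbV.add (D.vbH.zero ⟨m, x⟩) (D.corePartV x' η.val.val))
      map_add' := by
        intro η ζ
        show Psihat (D.vbV.add (D.vbH.zero ⟨m, x⟩)
            (D.corePartV x' (D.vbH.add η.val.val ζ.val.val)))
          = Psihat (D.vbV.add (D.vbH.zero ⟨m, x⟩) (D.corePartV x' η.val.val))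
            + Psihat (D.vbV.add (D.vbH.zero ⟨m, x⟩) (D.corePartV x' ζ.val.val))
        rw [D.corePartV_add (memT η) η.val.prop (memT ζ) ζ.val.prop]
        have hVu := D.corePartV_projV (x' := x') (memT η)
        have hHu := D.corePartV_projH (memT η) η.val.prop
        have hVv := D.corePartV_projV (x' := x') (memT ζ)
        have hHv := D.corePartV_projH (memT ζ) ζ.val.prop
        have hVs : D.vbV.proj (D.vbH.add (D.corePartV x' η.val.val)
            (D.corePartV x' ζ.val.val)) = ⟨m, (0 : EH m)⟩ := by
          have h := D.projV_addH (hHu.trans hHv.symm) hVu hVv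
          rw [h]; simp
        have hHs : D.vbH.proj (D.vbH.add (D.corePartV x' η.val.val)
            (D.corePartV x' ζ.val.val)) = ⟨m, (0 : EV m)⟩ :=
          (D.vbH.proj_add (hHu.trans hHv.symm)).trans hHu
        rw [hPsihat _ (pf _ hVs hHs), hPsihat _ (pf _ hVu hHu), hPsihat _ (pf _ hVv hHv)]
        exact D.evShiftH_add Ψ hVu hHu hVv hHv _ _ _
      map_smul' := by
        intro t η
        show Psihat (D.vbV.add (D.vbH.zero ⟨m, x⟩)
            (D.corePartV x' (D.vbH.smul t η.val.val)))
          = t • Psihat (D.vbV.add (D.vbH.zero ⟨m, x⟩) (D.corePartV x' η.val.val))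
        rw [D.corePartV_smul t (x' := x') (memT η)]
        have hVu := D.corePartV_projV (x' := x') (memT η)
        have hHu := D.corePartV_projH (memT η) η.val.prop
        have hVs : D.vbV.proj (D.vbH.smul t (D.corePartV x' η.val.val))
            = ⟨m, (0 : EH m)⟩ := by
          have h := D.projV_smulH t hVu
          rw [h]; simp
        have hHs : D.vbH.proj (D.vbH.smul t (D.corePartV x' η.val.val))
            = ⟨m, (0 : EV m)⟩ := (D.vbH.proj_smul t _).trans hHu
        rw [hPsihat _ (pf _ hVs hHs), hPsihat _ (pf _ hVu hHu)]
        rw [D.evShiftH_smul Ψ t hVu (pf _ hVs hHs) (pf _ hVu hHu)]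
        rw [smul_eq_mul]
    }
  obtain ⟨g, hg⟩ := LinearMap.exists_extend lam
  refine ⟨g, ?_⟩
  intro e hVe hHe h1 h2
  have hmem : (⟨D.vbV.add (D.vbH.zero ⟨m, x'⟩) e, h1⟩ : D.vbH.Fib ⟨m, x'⟩) ∈ T := by
    show D.vbV.proj (D.vbV.add (D.vbH.zero ⟨m, x'⟩) e) = ⟨m, (0 : EH m)⟩
    exact (D.vbV.proj_add (by rw [D.projV_zeroH, hVe])).trans (D.projV_zeroH m x')
  have hgu := LinearMap.congr_fun hg
    (⟨⟨D.vbV.add (D.vbH.zero ⟨m, x'⟩) e, h1⟩, hmem⟩ : T)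
  have hcp : D.corePartV x' (D.vbV.add (D.vbH.zero ⟨m, x'⟩) e) = e :=
    D.vbV.cancel₂ ⟨D.vbH.zero ⟨m, x'⟩, D.projV_zeroH m x'⟩ ⟨e, hVe⟩
  calc g ⟨D.vbV.add (D.vbH.zero ⟨m, x'⟩) e, h1⟩
      = Psihat (D.vbV.add (D.vbH.zero ⟨m, x⟩)
          (D.corePartV x' (D.vbV.add (D.vbH.zero ⟨m, x'⟩) e))) := hgu
    _ = Psihat (D.vbV.add (D.vbH.zero ⟨m, x⟩) e) := by rw [hcp]
    _ = Ψ ⟨D.vbV.add (D.vbH.zero ⟨m, x⟩) e, h2⟩ := hPsihat _ h2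

/-- The mirror image of `exists_dual_transport` for `E^{*V} → K*`. -/
theorem exists_dual_transportV {m : M} {X X' : EH m}
    (Φ : Module.Dual 𝕜 (D.vbV.Fib (⟨m, X⟩ : Σ m, EH m))) :
    ∃ Φ' : Module.Dual 𝕜 (D.vbV.Fib (⟨m, X'⟩ : Σ m, EH m)),
      ∀ (e : E) (_hVe : D.vbV.proj e = ⟨m, (0 : EH m)⟩)
        (hHe : D.vbH.proj e = ⟨m, (0 : EV m)⟩)
        (h1 : D.vbV.proj (D.vbH.add (D.vbV.zero ⟨m, X'⟩) e) = ⟨m, X'⟩)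
        (h2 : D.vbV.proj (D.vbH.add (D.vbV.zero ⟨m, X⟩) e) = ⟨m, X⟩),
        Φ' ⟨D.vbH.add (D.vbV.zero ⟨m, X'⟩) e, h1⟩
          = Φ ⟨D.vbH.add (D.vbV.zero ⟨m, X⟩) e, h2⟩ := by
  classical
  let Phihat : E → 𝕜 := fun ξ => if h : D.vbV.proj ξ = ⟨m, X⟩ then Φ ⟨ξ, h⟩ else 0
  have hPhihat : ∀ (ξ : E) (h : D.vbV.proj ξ = ⟨m, X⟩), Phihat ξ = Φ ⟨ξ, h⟩ :=
    fun ξ h => dif_pos h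
  have pf : ∀ w : E, D.vbV.proj w = ⟨m, (0 : EH m)⟩ → D.vbH.proj w = ⟨m, (0 : EV m)⟩ →
      D.vbV.proj (D.vbH.add (D.vbV.zero ⟨m, X⟩) w) = ⟨m, X⟩ := by
    intro w hVw hHw
    have h := D.projV_addH (by rw [D.projH_zeroV, hHw])
      (D.vbV.proj_zero (⟨m, X⟩ : Σ m, EH m)) hVw
    rw [h]
    simp
  let T : Submodule 𝕜 (D.vbV.Fib (⟨m, X'⟩ : Σ m, EH m)) :=
    { carrier := {η | D.vbH.proj η.val = ⟨m, (0 : EV m)⟩}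
      add_mem' := by
        intro a b ha hb
        show D.vbH.proj (D.vbV.add a.val b.val) = ⟨m, (0 : EV m)⟩
        have h := D.projH_addV (a.prop.trans b.prop.symm) ha hb
        rw [h]
        simp
      zero_mem' := by
        show D.vbH.proj (D.vbV.zero ⟨m, X'⟩) = ⟨m, (0 : EV m)⟩
        exact D.projH_zeroV m X'
      smul_mem' := by
        intro t a ha
        show D.vbH.proj (D.vbV.smul t a.val) = ⟨m, (0 : EV m)⟩
        have h := D.projH_smulV t ha
        rw [h]
        simp }
  have memT : ∀ η : T, D.vbH.proj (η.val.val) = ⟨m, (0 : EV m)⟩ := fun η => η.prop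
  let lam : T →ₗ[𝕜] 𝕜 :=
    { toFun := fun η => Phihat (D.vbH.add (D.vbV.zero ⟨m, X⟩) (D.corePartH X' η.val.val))
      map_add' := by
        intro η ζ
        show Phihat (D.vbH.add (D.vbV.zero ⟨m, X⟩)
            (D.corePartH X' (D.vbV.add η.val.val ζ.val.val)))
          = Phihat (D.vbH.add (D.vbV.zero ⟨m, X⟩) (D.corePartH X' η.val.val))
            + Phihat (D.vbH.add (D.vbV.zero ⟨m, X⟩) (D.corePartH X' ζ.val.val))
        rw [D.corePartH_add (memT η) η.val.prop (memT ζ) ζ.val.prop]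
        have hHu := D.corePartH_projH (X' := X') (memT η)
        have hVu := D.corePartH_projV (memT η) η.val.prop
        have hHv := D.corePartH_projH (X' := X') (memT ζ)
        have hVv := D.corePartH_projV (memT ζ) ζ.val.prop
        have hHs : D.vbH.proj (D.vbV.add (D.corePartH X' η.val.val)
            (D.corePartH X' ζ.val.val)) = ⟨m, (0 : EV m)⟩ := by
          have h := D.projH_addV (hVu.trans hVv.symm) hHu hHv
          rw [h]; simp
        have hVs : D.vbV.proj (D.vbV.add (D.corePartH X' η.val.val)
            (D.corePartH X' ζ.val.val)) = ⟨m, (0 : EH m)⟩ :=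
          (D.vbV.proj_add (hVu.trans hVv.symm)).trans hVu
        rw [hPhihat _ (pf _ hVs hHs), hPhihat _ (pf _ hVu hHu), hPhihat _ (pf _ hVv hHv)]
        exact D.evShiftV_add Φ hVu hHu hVv hHv _ _ _
      map_smul' := by
        intro t η
        show Phihat (D.vbH.add (D.vbV.zero ⟨m, X⟩)
            (D.corePartH X' (D.vbV.smul t η.val.val)))
          = t • Phihat (D.vbH.add (D.vbV.zero ⟨m, X⟩) (D.corePartH X' η.val.val))
        rw [D.corePartH_smul t (X' := X') (memT η)]
        have hHu := D.corePartH_projH (X' := X') (memT η)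
        have hVu := D.corePartH_projV (memT η) η.val.prop
        have hHs : D.vbH.proj (D.vbV.smul t (D.corePartH X' η.val.val))
            = ⟨m, (0 : EV m)⟩ := by
          have h := D.projH_smulV t hHu
          rw [h]; simp
        have hVs : D.vbV.proj (D.vbV.smul t (D.corePartH X' η.val.val))
            = ⟨m, (0 : EH m)⟩ := (D.vbV.proj_smul t _).trans hVu
        rw [hPhihat _ (pf _ hVs hHs), hPhihat _ (pf _ hVu hHu)]
        rw [D.evShiftV_smul Φ t hHu (pf _ hVs hHs) (pf _ hVu hHu)]
        rw [smul_eq_mul]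
    }
  obtain ⟨g, hg⟩ := LinearMap.exists_extend lam
  refine ⟨g, ?_⟩
  intro e hVe hHe h1 h2
  have hmem : (⟨D.vbH.add (D.vbV.zero ⟨m, X'⟩) e, h1⟩ : D.vbV.Fib ⟨m, X'⟩) ∈ T := by
    show D.vbH.proj (D.vbH.add (D.vbV.zero ⟨m, X'⟩) e) = ⟨m, (0 : EV m)⟩
    exact (D.vbH.proj_add (by rw [D.projH_zeroV, hHe])).trans (D.projH_zeroV m X')
  have hgu := LinearMap.congr_fun hg
    (⟨⟨D.vbH.add (D.vbV.zero ⟨m, X'⟩) e, h1⟩, hmem⟩ : T)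
  have hcp : D.corePartH X' (D.vbH.add (D.vbV.zero ⟨m, X'⟩) e) = e :=
    D.vbH.cancel₂ ⟨D.vbV.zero ⟨m, X'⟩, D.projH_zeroV m X'⟩ ⟨e, hHe⟩
  calc g ⟨D.vbH.add (D.vbV.zero ⟨m, X'⟩) e, h1⟩
      = Phihat (D.vbH.add (D.vbV.zero ⟨m, X⟩)
          (D.corePartH X' (D.vbH.add (D.vbV.zero ⟨m, X'⟩) e))) := hgu
    _ = Phihat (D.vbH.add (D.vbV.zero ⟨m, X⟩) e) := by rw [hcp]
    _ = Φ ⟨D.vbH.add (D.vbV.zero ⟨m, X⟩) e, h2⟩ := hPhihat _ h2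

end DVB

/-- Let `Φ ∈ E^{*V}` have form `(Φ; X, κ; m)` and `Ψ ∈ E^{*H}` have
form `(Ψ; κ, x; m)` (same `κ ∈ K*_m`, expressed by the hypothesis that the two
induced core functionals agree), and define `⟨Φ, Ψ⟩ = ⟨Ψ, ξ⟩ − ⟨Φ, ξ⟩` for `ξ` of
form `(ξ; X, x; m)`. Then (1) `⟨Φ, Ψ⟩` does not depend on the choice of `ξ`;
(2) for fixed `κ` the pairing is bilinear in `Φ` and `Ψ` (with respect to the
vector bundle structures of `E^{*V} → K*` and `E^{*H} → K*`, whose operations are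
characterized by `⟨Φ ∔ Φ', ξ +_H ξ'⟩ = ⟨Φ,ξ⟩ + ⟨Φ',ξ'⟩`, `⟨t ∙ Φ, t ·_H ξ⟩ = t⟨Φ,ξ⟩`
and their mirror images); and (3) the pairing is nondegenerate: if `⟨Φ, Ψ'⟩ = 0` for
all `Ψ'` over `κ` then `Φ` is the zero element of `E^{*V}` over `κ`, and
symmetrically.  Thus `E^{*V} → K*` and `E^{*H} → K*` are vector bundles
in duality. -/
theorem dvb_dual_duality {𝕜 M E : Type*} [Field 𝕜] {EH EV : M → Type*}
    [∀ m, AddCommGroup (EH m)] [∀ m, Module 𝕜 (EH m)]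
    [∀ m, AddCommGroup (EV m)] [∀ m, Module 𝕜 (EV m)]
    (D : DVB 𝕜 E EH EV) (m : M) (X : EH m) (x : EV m)
    (Φ : Module.Dual 𝕜 (D.vbV.Fib ⟨m, X⟩)) (Ψ : Module.Dual 𝕜 (D.vbH.Fib ⟨m, x⟩))
    (hκ : ∀ k : D.CoreT m, D.evCoreV Φ k = D.evCoreH Ψ k) :
    -- (1) the pairing is independent of the representative `ξ`:
    (∀ (ξ ξ' : E) (hV : D.vbV.proj ξ = ⟨m, X⟩) (hH : D.vbH.proj ξ = ⟨m, x⟩)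
        (hV' : D.vbV.proj ξ' = ⟨m, X⟩) (hH' : D.vbH.proj ξ' = ⟨m, x⟩),
      Ψ ⟨ξ, hH⟩ - Φ ⟨ξ, hV⟩ = Ψ ⟨ξ', hH'⟩ - Φ ⟨ξ', hV'⟩) ∧
    -- (2a) additivity in the `E^{*V}` slot:
    (∀ (X' : EH m) (Φ' : Module.Dual 𝕜 (D.vbV.Fib ⟨m, X'⟩)),
      (∀ k : D.CoreT m, D.evCoreV Φ' k = D.evCoreH Ψ k) →
      ∀ (Sf : Module.Dual 𝕜 (D.vbV.Fib ⟨m, X + X'⟩)),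
      (∀ (ξ₁ : D.vbV.Fib ⟨m, X⟩) (ξ₂ : D.vbV.Fib ⟨m, X'⟩),
          D.vbH.proj ξ₁.val = D.vbH.proj ξ₂.val →
          ∀ hmem : D.vbV.proj (D.vbH.add ξ₁.val ξ₂.val) = ⟨m, X + X'⟩,
        Sf ⟨D.vbH.add ξ₁.val ξ₂.val, hmem⟩ = Φ ξ₁ + Φ' ξ₂) →
      ∀ (ζ : E) (hVζ : D.vbV.proj ζ = ⟨m, X + X'⟩) (hHζ : D.vbH.proj ζ = ⟨m, x⟩)
        (ξ : E) (hVξ : D.vbV.proj ξ = ⟨m, X⟩) (hHξ : D.vbH.proj ξ = ⟨m, x⟩)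
        (ξ' : E) (hVξ' : D.vbV.proj ξ' = ⟨m, X'⟩) (hHξ' : D.vbH.proj ξ' = ⟨m, x⟩),
      Ψ ⟨ζ, hHζ⟩ - Sf ⟨ζ, hVζ⟩
        = (Ψ ⟨ξ, hHξ⟩ - Φ ⟨ξ, hVξ⟩) + (Ψ ⟨ξ', hHξ'⟩ - Φ' ⟨ξ', hVξ'⟩)) ∧
    -- (2b) homogeneity in the `E^{*V}` slot:
    (∀ (t : 𝕜) (Φt : Module.Dual 𝕜 (D.vbV.Fib ⟨m, t • X⟩)),
      (∀ k : D.CoreT m, D.evCoreV Φt k = D.evCoreH Ψ k) →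
      (∀ (ξ₁ : D.vbV.Fib ⟨m, X⟩)
          (hmem : D.vbV.proj (D.vbH.smul t ξ₁.val) = ⟨m, t • X⟩),
        Φt ⟨D.vbH.smul t ξ₁.val, hmem⟩ = t * Φ ξ₁) →
      ∀ (ζ : E) (hVζ : D.vbV.proj ζ = ⟨m, t • X⟩) (hHζ : D.vbH.proj ζ = ⟨m, x⟩)
        (ξ : E) (hVξ : D.vbV.proj ξ = ⟨m, X⟩) (hHξ : D.vbH.proj ξ = ⟨m, x⟩),
      Ψ ⟨ζ, hHζ⟩ - Φt ⟨ζ, hVζ⟩ = t * (Ψ ⟨ξ, hHξ⟩ - Φ ⟨ξ, hVξ⟩)) ∧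
    -- (2c) additivity in the `E^{*H}` slot:
    (∀ (x' : EV m) (Ψ' : Module.Dual 𝕜 (D.vbH.Fib ⟨m, x'⟩)),
      (∀ k : D.CoreT m, D.evCoreH Ψ' k = D.evCoreV Φ k) →
      ∀ (Sg : Module.Dual 𝕜 (D.vbH.Fib ⟨m, x + x'⟩)),
      (∀ (η₁ : D.vbH.Fib ⟨m, x⟩) (η₂ : D.vbH.Fib ⟨m, x'⟩),
          D.vbV.proj η₁.val = D.vbV.proj η₂.val →
          ∀ hmem : D.vbH.proj (D.vbV.add η₁.val η₂.val) = ⟨m, x + x'⟩,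
        Sg ⟨D.vbV.add η₁.val η₂.val, hmem⟩ = Ψ η₁ + Ψ' η₂) →
      ∀ (ζ : E) (hVζ : D.vbV.proj ζ = ⟨m, X⟩) (hHζ : D.vbH.proj ζ = ⟨m, x + x'⟩)
        (ξ : E) (hVξ : D.vbV.proj ξ = ⟨m, X⟩) (hHξ : D.vbH.proj ξ = ⟨m, x⟩)
        (ξ' : E) (hVξ' : D.vbV.proj ξ' = ⟨m, X⟩) (hHξ' : D.vbH.proj ξ' = ⟨m, x'⟩),
      Sg ⟨ζ, hHζ⟩ - Φ ⟨ζ, hVζ⟩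
        = (Ψ ⟨ξ, hHξ⟩ - Φ ⟨ξ, hVξ⟩) + (Ψ' ⟨ξ', hHξ'⟩ - Φ ⟨ξ', hVξ'⟩)) ∧
    -- (2d) homogeneity in the `E^{*H}` slot:
    (∀ (t : 𝕜) (Ψt : Module.Dual 𝕜 (D.vbH.Fib ⟨m, t • x⟩)),
      (∀ k : D.CoreT m, D.evCoreH Ψt k = D.evCoreV Φ k) →
      (∀ (η₁ : D.vbH.Fib ⟨m, x⟩)
          (hmem : D.vbH.proj (D.vbV.smul t η₁.val) = ⟨m, t • x⟩),
        Ψt ⟨D.vbV.smul t η₁.val, hmem⟩ = t * Ψ η₁) →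
      ∀ (ζ : E) (hVζ : D.vbV.proj ζ = ⟨m, X⟩) (hHζ : D.vbH.proj ζ = ⟨m, t • x⟩)
        (ξ : E) (hVξ : D.vbV.proj ξ = ⟨m, X⟩) (hHξ : D.vbH.proj ξ = ⟨m, x⟩),
      Ψt ⟨ζ, hHζ⟩ - Φ ⟨ζ, hVζ⟩ = t * (Ψ ⟨ξ, hHξ⟩ - Φ ⟨ξ, hVξ⟩)) ∧
    -- (3a) nondegeneracy: if `⟨Φ, Ψ'⟩ = 0` for all `Ψ'` over `κ`, then `Φ` is the
    -- zero element of `E^{*V}` over `κ`: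
    ((∀ (x' : EV m) (Ψ' : Module.Dual 𝕜 (D.vbH.Fib ⟨m, x'⟩)),
        (∀ k : D.CoreT m, D.evCoreH Ψ' k = D.evCoreV Φ k) →
        ∀ (ξ : E) (hV : D.vbV.proj ξ = ⟨m, X⟩) (hH' : D.vbH.proj ξ = ⟨m, x'⟩),
          Ψ' ⟨ξ, hH'⟩ - Φ ⟨ξ, hV⟩ = 0) →
      X = 0 ∧ ∀ (x' : EV m) (k : D.CoreT m)
          (hmem : D.vbV.proj (D.vbV.add (D.vbH.zero ⟨m, x'⟩) k.val.val) = ⟨m, X⟩),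
        Φ ⟨D.vbV.add (D.vbH.zero ⟨m, x'⟩) k.val.val, hmem⟩ = D.evCoreV Φ k) ∧
    -- (3b) and symmetrically for `Ψ`:
    ((∀ (X' : EH m) (Φ' : Module.Dual 𝕜 (D.vbV.Fib ⟨m, X'⟩)),
        (∀ k : D.CoreT m, D.evCoreV Φ' k = D.evCoreH Ψ k) →
        ∀ (ξ : E) (hV' : D.vbV.proj ξ = ⟨m, X'⟩) (hH : D.vbH.proj ξ = ⟨m, x⟩),
          Ψ ⟨ξ, hH⟩ - Φ' ⟨ξ, hV'⟩ = 0) →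
      x = 0 ∧ ∀ (X' : EH m) (k : D.CoreT m)
          (hmem : D.vbH.proj (D.vbH.add (D.vbV.zero ⟨m, X'⟩) k.val.val) = ⟨m, x⟩),
        Ψ ⟨D.vbH.add (D.vbV.zero ⟨m, X'⟩) k.val.val, hmem⟩ = D.evCoreH Ψ k) := by
  obtain ⟨ξ₀, hV₀, hH₀⟩ := D.double_surj m X x
  refine ⟨?_, ?_, ?_, ?_, ?_, ?_, ?_⟩
  · -- (1) independence of the representative
    intro ξ ξ' hV hH hV' hH'
    exact D.pairing_indep Φ Ψ hκ hV' hH' hV hH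
  · -- (2a) additivity in the `E^{*V}` slot
    intro X' Φ' hΦ' Sf hSf ζ hVζ hHζ ξ hVξ hHξ ξ' hVξ' hHξ'
    have hSfκ : ∀ k : D.CoreT m, D.evCoreV Sf k = D.evCoreH Ψ k := by
      intro k
      have key : D.vbH.add (D.vbV.zero ⟨m, X + X'⟩) k.val.val
          = D.vbH.add (D.vbV.zero ⟨m, X⟩) (D.vbH.add (D.vbV.zero ⟨m, X'⟩) k.val.val) := by
        rw [D.zeroV_add]
        exact D.vbH.add_assoc ((D.projH_zeroV m X).trans (D.projH_zeroV m X').symm)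
          ((D.projH_zeroV m X').trans (D.core_projH k).symm)
      have hm2 : D.vbV.proj (D.vbH.add (D.vbV.zero ⟨m, X⟩)
          (D.vbH.add (D.vbV.zero ⟨m, X'⟩) k.val.val)) = ⟨m, X + X'⟩ :=
        key ▸ D.zeroV_addH_core_mem (X + X') k
      have hproj : D.vbH.proj (D.vbV.zero ⟨m, X⟩)
          = D.vbH.proj (D.vbH.add (D.vbV.zero ⟨m, X'⟩) k.val.val) := by
        rw [D.projH_zeroV,
          D.vbH.proj_add ((D.projH_zeroV m X').trans (D.core_projH k).symm),
          D.projH_zeroV]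
      have h2 : Sf ⟨D.vbH.add (D.vbV.zero ⟨m, X⟩)
            (D.vbH.add (D.vbV.zero ⟨m, X'⟩) k.val.val), hm2⟩
          = Φ ⟨D.vbV.zero ⟨m, X⟩, D.vbV.proj_zero _⟩
            + Φ' ⟨D.vbH.add (D.vbV.zero ⟨m, X'⟩) k.val.val, D.zeroV_addH_core_mem X' k⟩ :=
        hSf ⟨D.vbV.zero ⟨m, X⟩, D.vbV.proj_zero _⟩
          ⟨D.vbH.add (D.vbV.zero ⟨m, X'⟩) k.val.val, D.zeroV_addH_core_mem X' k⟩ hproj hm2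
      have h0 : Φ (⟨D.vbV.zero ⟨m, X⟩, D.vbV.proj_zero _⟩ : D.vbV.Fib ⟨m, X⟩) = 0 :=
        map_zero Φ
      calc D.evCoreV Sf k
          = Sf ⟨D.vbH.add (D.vbV.zero ⟨m, X + X'⟩) k.val.val,
              D.zeroV_addH_core_mem (X + X') k⟩ := rfl
        _ = Sf ⟨D.vbH.add (D.vbV.zero ⟨m, X⟩)
              (D.vbH.add (D.vbV.zero ⟨m, X'⟩) k.val.val), hm2⟩ :=
            D.vbV.dual_congr Sf key _ hm2
        _ = Φ ⟨D.vbV.zero ⟨m, X⟩, D.vbV.proj_zero _⟩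
              + Φ' ⟨D.vbH.add (D.vbV.zero ⟨m, X'⟩) k.val.val,
                  D.zeroV_addH_core_mem X' k⟩ := h2
        _ = D.evCoreV Φ' k := by rw [h0, zero_add]; rfl
        _ = D.evCoreH Ψ k := hΦ' k
    have hHeq : D.vbH.proj ξ = D.vbH.proj ξ' := hHξ.trans hHξ'.symm
    have hVη : D.vbV.proj (D.vbH.add ξ ξ') = ⟨m, X + X'⟩ := D.projV_addH hHeq hVξ hVξ'
    have hHη : D.vbH.proj (D.vbH.add ξ ξ') = ⟨m, x⟩ := (D.vbH.proj_add hHeq).trans hHξ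
    have main := D.pairing_indep Sf Ψ hSfκ hVη hHη hVζ hHζ
    have hΨη : Ψ ⟨D.vbH.add ξ ξ', hHη⟩ = Ψ ⟨ξ, hHξ⟩ + Ψ ⟨ξ', hHξ'⟩ := by
      let u : D.vbH.Fib (⟨m, x⟩ : Σ m, EV m) := ⟨ξ, hHξ⟩
      let w : D.vbH.Fib (⟨m, x⟩ : Σ m, EV m) := ⟨ξ', hHξ'⟩
      have hsplit : (⟨D.vbH.add ξ ξ', hHη⟩ : D.vbH.Fib ⟨m, x⟩) = u + w := Subtype.ext rfl
      rw [hsplit, map_add]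
    have hSfη : Sf ⟨D.vbH.add ξ ξ', hVη⟩ = Φ ⟨ξ, hVξ⟩ + Φ' ⟨ξ', hVξ'⟩ :=
      hSf ⟨ξ, hVξ⟩ ⟨ξ', hVξ'⟩ hHeq hVη
    rw [main, hΨη, hSfη]
    ring
  · -- (2b) homogeneity in the `E^{*V}` slot
    intro t Φt hκt hΦt ζ hVζ hHζ ξ hVξ hHξ
    have hVη : D.vbV.proj (D.vbH.smul t ξ) = ⟨m, t • X⟩ := D.projV_smulH t hVξ
    have hHη : D.vbH.proj (D.vbH.smul t ξ) = ⟨m, x⟩ := (D.vbH.proj_smul t ξ).trans hHξ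
    have main := D.pairing_indep Φt Ψ hκt hVη hHη hVζ hHζ
    have hΨη : Ψ ⟨D.vbH.smul t ξ, hHη⟩ = t * Ψ ⟨ξ, hHξ⟩ := by
      let u : D.vbH.Fib (⟨m, x⟩ : Σ m, EV m) := ⟨ξ, hHξ⟩
      have hsplit : (⟨D.vbH.smul t ξ, hHη⟩ : D.vbH.Fib ⟨m, x⟩) = t • u := Subtype.ext rfl
      rw [hsplit, map_smul, smul_eq_mul]
    have hΦtη : Φt ⟨D.vbH.smul t ξ, hVη⟩ = t * Φ ⟨ξ, hVξ⟩ := hΦt ⟨ξ, hVξ⟩ hVη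
    rw [main, hΨη, hΦtη]
    ring
  · -- (2c) additivity in the `E^{*H}` slot
    intro x' Ψ' hΨ' Sg hSg ζ hVζ hHζ ξ hVξ hHξ ξ' hVξ' hHξ'
    have hSgκ : ∀ k : D.CoreT m, D.evCoreV Φ k = D.evCoreH Sg k := by
      intro k
      have key : D.vbV.add (D.vbH.zero ⟨m, x + x'⟩) k.val.val
          = D.vbV.add (D.vbH.zero ⟨m, x⟩) (D.vbV.add (D.vbH.zero ⟨m, x'⟩) k.val.val) := by
        rw [D.zeroH_add]
        exact D.vbV.add_assoc ((D.projV_zeroH m x).trans (D.projV_zeroH m x').symm)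
          ((D.projV_zeroH m x').trans (D.core_projV k).symm)
      have hm2 : D.vbH.proj (D.vbV.add (D.vbH.zero ⟨m, x⟩)
          (D.vbV.add (D.vbH.zero ⟨m, x'⟩) k.val.val)) = ⟨m, x + x'⟩ :=
        key ▸ D.zeroH_addV_core_mem (x + x') k
      have hproj : D.vbV.proj (D.vbH.zero ⟨m, x⟩)
          = D.vbV.proj (D.vbV.add (D.vbH.zero ⟨m, x'⟩) k.val.val) := by
        rw [D.projV_zeroH,
          D.vbV.proj_add ((D.projV_zeroH m x').trans (D.core_projV k).symm),
          D.projV_zeroH]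
      have h2 : Sg ⟨D.vbV.add (D.vbH.zero ⟨m, x⟩)
            (D.vbV.add (D.vbH.zero ⟨m, x'⟩) k.val.val), hm2⟩
          = Ψ ⟨D.vbH.zero ⟨m, x⟩, D.vbH.proj_zero _⟩
            + Ψ' ⟨D.vbV.add (D.vbH.zero ⟨m, x'⟩) k.val.val, D.zeroH_addV_core_mem x' k⟩ :=
        hSg ⟨D.vbH.zero ⟨m, x⟩, D.vbH.proj_zero _⟩
          ⟨D.vbV.add (D.vbH.zero ⟨m, x'⟩) k.val.val, D.zeroH_addV_core_mem x' k⟩ hproj hm2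
      have h0 : Ψ (⟨D.vbH.zero ⟨m, x⟩, D.vbH.proj_zero _⟩ : D.vbH.Fib ⟨m, x⟩) = 0 :=
        map_zero Ψ
      have hrev : D.evCoreH Sg k = D.evCoreV Φ k := by
        calc D.evCoreH Sg k
            = Sg ⟨D.vbV.add (D.vbH.zero ⟨m, x + x'⟩) k.val.val,
                D.zeroH_addV_core_mem (x + x') k⟩ := rfl
          _ = Sg ⟨D.vbV.add (D.vbH.zero ⟨m, x⟩)
                (D.vbV.add (D.vbH.zero ⟨m, x'⟩) k.val.val), hm2⟩ :=
              D.vbH.dual_congr Sg key _ hm2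
          _ = Ψ ⟨D.vbH.zero ⟨m, x⟩, D.vbH.proj_zero _⟩
                + Ψ' ⟨D.vbV.add (D.vbH.zero ⟨m, x'⟩) k.val.val,
                    D.zeroH_addV_core_mem x' k⟩ := h2
          _ = D.evCoreH Ψ' k := by rw [h0, zero_add]; rfl
          _ = D.evCoreV Φ k := hΨ' k
      exact hrev.symm
    have hVeq : D.vbV.proj ξ = D.vbV.proj ξ' := hVξ.trans hVξ'.symm
    have hVη : D.vbV.proj (D.vbV.add ξ ξ') = ⟨m, X⟩ := (D.vbV.proj_add hVeq).trans hVξ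
    have hHη : D.vbH.proj (D.vbV.add ξ ξ') = ⟨m, x + x'⟩ := D.projH_addV hVeq hHξ hHξ'
    have main := D.pairing_indep Φ Sg hSgκ hVη hHη hVζ hHζ
    have hΦη : Φ ⟨D.vbV.add ξ ξ', hVη⟩ = Φ ⟨ξ, hVξ⟩ + Φ ⟨ξ', hVξ'⟩ := by
      let u : D.vbV.Fib (⟨m, X⟩ : Σ m, EH m) := ⟨ξ, hVξ⟩
      let w : D.vbV.Fib (⟨m, X⟩ : Σ m, EH m) := ⟨ξ', hVξ'⟩
      have hsplit : (⟨D.vbV.add ξ ξ', hVη⟩ : D.vbV.Fib ⟨m, X⟩) = u + w := Subtype.ext rfl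
      rw [hsplit, map_add]
    have hSgη : Sg ⟨D.vbV.add ξ ξ', hHη⟩ = Ψ ⟨ξ, hHξ⟩ + Ψ' ⟨ξ', hHξ'⟩ :=
      hSg ⟨ξ, hHξ⟩ ⟨ξ', hHξ'⟩ hVeq hHη
    rw [main, hΦη, hSgη]
    ring
  · -- (2d) homogeneity in the `E^{*H}` slot
    intro t Ψt hκt hΨt ζ hVζ hHζ ξ hVξ hHξ
    have hVη : D.vbV.proj (D.vbV.smul t ξ) = ⟨m, X⟩ := (D.vbV.proj_smul t ξ).trans hVξ
    have hHη : D.vbH.proj (D.vbV.smul t ξ) = ⟨m, t • x⟩ := D.projH_smulV t hHξ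
    have main := D.pairing_indep Φ Ψt (fun k => (hκt k).symm) hVη hHη hVζ hHζ
    have hΦη : Φ ⟨D.vbV.smul t ξ, hVη⟩ = t * Φ ⟨ξ, hVξ⟩ := by
      let u : D.vbV.Fib (⟨m, X⟩ : Σ m, EH m) := ⟨ξ, hVξ⟩
      have hsplit : (⟨D.vbV.smul t ξ, hVη⟩ : D.vbV.Fib ⟨m, X⟩) = t • u := Subtype.ext rfl
      rw [hsplit, map_smul, smul_eq_mul]
    have hΨtη : Ψt ⟨D.vbV.smul t ξ, hHη⟩ = t * Ψ ⟨ξ, hHξ⟩ := hΨt ⟨ξ, hHξ⟩ hHη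
    rw [main, hΦη, hΨtη]
    ring
  · -- (3a) nondegeneracy in the first slot
    intro hyp
    constructor
    · refine (Module.forall_dual_apply_eq_zero_iff 𝕜 X).mp ?_
      intro p
      have e1 := hyp x Ψ (fun k => (hκ k).symm) ξ₀ hV₀ hH₀
      have cond : ∀ k : D.CoreT m,
          D.evCoreH (Ψ + p ∘ₗ D.Ycomp x) k = D.evCoreV Φ k := by
        intro k
        have hproj0 : D.vbV.proj (D.vbV.add (D.vbH.zero ⟨m, x⟩) k.val.val)
            = ⟨m, (0 : EH m)⟩ :=
          (D.vbV.proj_add ((D.projV_zeroH m x).trans (D.core_projV k).symm)).trans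
            (D.projV_zeroH m x)
        have hY0 : D.Ycomp x ⟨D.vbV.add (D.vbH.zero ⟨m, x⟩) k.val.val,
            D.zeroH_addV_core_mem x k⟩ = 0 :=
          sig_eq' ((D.exists_fibV _
            (D.zeroH_addV_core_mem x k)).choose_spec.symm.trans hproj0)
        erw [D.evCoreH_def, LinearMap.add_apply, LinearMap.comp_apply, hY0, map_zero,
          add_zero, ← D.evCoreH_def]
        exact (hκ k).symm
      have e2 := hyp x (Ψ + p ∘ₗ D.Ycomp x) cond ξ₀ hV₀ hH₀
      have hYξ : D.Ycomp x ⟨ξ₀, hH₀⟩ = X :=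
        sig_eq' ((D.exists_fibV ξ₀ hH₀).choose_spec.symm.trans hV₀)
      erw [LinearMap.add_apply, LinearMap.comp_apply, hYξ] at e2
      linear_combination e2 - e1
    · intro x' k hmem
      obtain ⟨Ψ', hΨ'⟩ := D.exists_dual_transport (x := x) (x' := x') Ψ
      have cond : ∀ k' : D.CoreT m, D.evCoreH Ψ' k' = D.evCoreV Φ k' := by
        intro k'
        rw [D.evCoreH_def, hΨ' k'.val.val (D.core_projV k') (D.core_projH k')
          (D.zeroH_addV_core_mem x' k') (D.zeroH_addV_core_mem x k'), ← D.evCoreH_def]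
        exact (hκ k').symm
      have hthis := hyp x' Ψ' cond (D.vbV.add (D.vbH.zero ⟨m, x'⟩) k.val.val) hmem
        (D.zeroH_addV_core_mem x' k)
      rw [hΨ' k.val.val (D.core_projV k) (D.core_projH k) (D.zeroH_addV_core_mem x' k)
        (D.zeroH_addV_core_mem x k), ← D.evCoreH_def, ← hκ k] at hthis
      linear_combination -hthis
  · -- (3b) nondegeneracy in the second slot
    intro hyp
    constructor
    · refine (Module.forall_dual_apply_eq_zero_iff 𝕜 x).mp ?_
      intro p
      have e1 := hyp X Φ hκ ξ₀ hV₀ hH₀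
      have cond : ∀ k : D.CoreT m,
          D.evCoreV (Φ + p ∘ₗ D.YcompV X) k = D.evCoreH Ψ k := by
        intro k
        have hproj0 : D.vbH.proj (D.vbH.add (D.vbV.zero ⟨m, X⟩) k.val.val)
            = ⟨m, (0 : EV m)⟩ :=
          (D.vbH.proj_add ((D.projH_zeroV m X).trans (D.core_projH k).symm)).trans
            (D.projH_zeroV m X)
        have hY0 : D.YcompV X ⟨D.vbH.add (D.vbV.zero ⟨m, X⟩) k.val.val,
            D.zeroV_addH_core_mem X k⟩ = 0 :=
          sig_eq' ((D.exists_fibH _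
            (D.zeroV_addH_core_mem X k)).choose_spec.symm.trans hproj0)
        erw [D.evCoreV_def, LinearMap.add_apply, LinearMap.comp_apply, hY0, map_zero,
          add_zero, ← D.evCoreV_def]
        exact hκ k
      have e2 := hyp X (Φ + p ∘ₗ D.YcompV X) cond ξ₀ hV₀ hH₀
      have hYξ : D.YcompV X ⟨ξ₀, hV₀⟩ = x :=
        sig_eq' ((D.exists_fibH ξ₀ hV₀).choose_spec.symm.trans hH₀)
      erw [LinearMap.add_apply, LinearMap.comp_apply, hYξ] at e2
      linear_combination e1 - e2
    · intro X' k hmem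
      obtain ⟨Φ', hΦ'⟩ := D.exists_dual_transportV (X := X) (X' := X') Φ
      have cond : ∀ k' : D.CoreT m, D.evCoreV Φ' k' = D.evCoreH Ψ k' := by
        intro k'
        rw [D.evCoreV_def, hΦ' k'.val.val (D.core_projV k') (D.core_projH k')
          (D.zeroV_addH_core_mem X' k') (D.zeroV_addH_core_mem X k'), ← D.evCoreV_def]
        exact hκ k'
      have hthis := hyp X' Φ' cond (D.vbH.add (D.vbV.zero ⟨m, X'⟩) k.val.val)
        (D.zeroV_addH_core_mem X' k) hmem
      rw [hΦ' k.val.val (D.core_projV k) (D.core_projH k) (D.zeroV_addH_core_mem X' k)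
        (D.zeroV_addH_core_mem X k), ← D.evCoreV_def, hκ k] at hthis
      linear_combination hthis
end
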